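/- arXiv:1803.01336 — 4 statements merged into one kernel-verified Lean document; each statement's English description precedes it below -/
import Mathlib

section
/- Assume that Υ_k > 0 and Λ_k > 0 for k = 0,…,N+1. Then the process λ_{k−1} = Z_k x̂_{k|k} + X_k x̃_k (k = 0,…,N+1) is a solution of the forward–backward stochastic difference equations x_{k+1} = A x_k + B^L u_k^L + B^R u_k^R + ω_k, λ_{k−1} = E[A′λ_k | F_k] + Q x_k for k = 0,…,N, λ_N = P_{N+1} x_{N+1}, where the controls satisfy the stationarity conditions 0 = E[(B^L)′λ_k | F_k] + R^L u_k^L and 0 = E[(B^R)′λ_k | F{Y_k}] + R^R u_k^R. -/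
/-!
Write `d_k = A x_k + B^L u^L_k + B^R u^R_k` and `d̂_k = A x̂_{k|k} + B^L û^L_k + B^R u^R_k` with
`û^L_k = E[u^L_k | F{Y_k}]`. As `ω_k` is independent of everything generated up to time `k`,
`E[x_{k+1} | F_k] = d_k` and `E[x_{k+1} | F{Y_k}] = d̂_k`. As the dropout `η_{k+1}` is independent
of `x_{k+1}` and of `F{Y_k}`, the estimator obeys
`x̂_{k+1|k+1} = η_{k+1} x_{k+1} + (1 − η_{k+1}) x̂_{k+1|k}`, so
`x̃_{k+1} = (1 − η_{k+1}) (x_{k+1} − x̂_{k+1|k})` has `E[x̃_{k+1} | F_k] = p (d_k − d̂_k)`.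
Hence `E[λ_k | F_k] = Z d̂_k + Ψ (d_k − d̂_k)` and `E[λ_k | F{Y_k}] = Z d̂_k`. The stationarity
conditions then say that `(û^L_k, u^R_k)` is the optimal input of the `Z`-step for the state
`x̂_{k|k}` and that `u^L_k − û^L_k` is the optimal input of the `X`-step for the state `x̃_k`;
substituting them into the two Riccati steps gives
`Z_k x̂_{k|k} + X_k x̃_k = A′ E[λ_k | F_k] + Q x_k`.
-/

open MeasureTheory ProbabilityTheory Matrix Filter

noncomputable section

namespace NCS0

/-- System data for the networked control system: plant matrices `A, B^L, B^R`,
weight matrices `Q, R^L, R^R` and packet-dropout probability `p`. -/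
structure Sys (n mL mR : ℕ) where
  A : Matrix (Fin n) (Fin n) ℝ
  BL : Matrix (Fin n) (Fin mL) ℝ
  BR : Matrix (Fin n) (Fin mR) ℝ
  Q : Matrix (Fin n) (Fin n) ℝ
  RL : Matrix (Fin mL) (Fin mL) ℝ
  RR : Matrix (Fin mR) (Fin mR) ℝ
  p : ℝ

namespace Sys

variable {n mL mR : ℕ} (S : Sys n mL mR)

/-- The stacked input matrix `[B^L  B^R]`. -/
def Bc : Matrix (Fin n) (Fin mL ⊕ Fin mR) ℝ := fromCols S.BL S.BR

/-- The stacked weight `diag(R^L, R^R)`. -/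
def Rc : Matrix (Fin mL ⊕ Fin mR) (Fin mL ⊕ Fin mR) ℝ := fromBlocks S.RL 0 0 S.RR

/-- `Υ = [B^L B^R]′ Z [B^L B^R] + diag(R^L, R^R)`. -/
def Ups (Z : Matrix (Fin n) (Fin n) ℝ) : Matrix (Fin mL ⊕ Fin mR) (Fin mL ⊕ Fin mR) ℝ :=
  S.Bcᵀ * Z * S.Bc + S.Rc

/-- `K = Υ⁻¹ [B^L B^R]′ Z A`. -/
def Kg (Z : Matrix (Fin n) (Fin n) ℝ) : Matrix (Fin mL ⊕ Fin mR) (Fin n) ℝ :=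
  (S.Ups Z)⁻¹ * (S.Bcᵀ * Z * S.A)

/-- `Ψ = (1 − p) Z + p X`. -/
def Psi (Z X : Matrix (Fin n) (Fin n) ℝ) : Matrix (Fin n) (Fin n) ℝ :=
  (1 - S.p) • Z + S.p • X

/-- `Λ = (B^L)′ Ψ B^L + R^L`. -/
def Lam (Ψ : Matrix (Fin n) (Fin n) ℝ) : Matrix (Fin mL) (Fin mL) ℝ :=
  S.BLᵀ * Ψ * S.BL + S.RL

/-- `M = (B^L)′ Ψ A`. -/
def Mg (Ψ : Matrix (Fin n) (Fin n) ℝ) : Matrix (Fin mL) (Fin n) ℝ :=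
  S.BLᵀ * Ψ * S.A

/-- One backward step of the `Z`-Riccati recursion: `A′ZA + Q − K′ΥK`. -/
def Zstep (Z : Matrix (Fin n) (Fin n) ℝ) : Matrix (Fin n) (Fin n) ℝ :=
  S.Aᵀ * Z * S.A + S.Q - (S.Kg Z)ᵀ * S.Ups Z * S.Kg Z

/-- One backward step of the `X`-Riccati recursion: `A′ΨA + Q − M′Λ⁻¹M`. -/
def Xstep (Ψ : Matrix (Fin n) (Fin n) ℝ) : Matrix (Fin n) (Fin n) ℝ :=
  S.Aᵀ * Ψ * S.A + S.Q - (S.Mg Ψ)ᵀ * (S.Lam Ψ)⁻¹ * S.Mg Ψ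

/-- The coupled Riccati recursion in "steps-to-go" form with terminal value `P`:
`ZX P j` is the pair `(Z_k(N), X_k(N))` when `j = N + 1 − k` (terminal values
`Z_{N+1} = X_{N+1} = P`). -/
def ZX (P : Matrix (Fin n) (Fin n) ℝ) : ℕ → Matrix (Fin n) (Fin n) ℝ × Matrix (Fin n) (Fin n) ℝ
  | 0 => (P, P)
  | j + 1 =>
      (S.Zstep (ZX P j).1, S.Xstep (S.Psi (ZX P j).1 (ZX P j).2))

end Sys

variable {Ω : Type*} [MeasurableSpace Ω]

/-- The remote-controller information σ-algebra `F{Y_k} = σ(y_0, …, y_k)`, where the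
channel output `y_j` is modelled by the pair `(η_j, η_j · x_j)` (when `η_j = 1` the
receiver sees `x_j`, when `η_j = 0` it sees nothing). -/
def GY {n : ℕ} (η : ℕ → Ω → ℝ) (x : ℕ → Ω → Fin n → ℝ) (k : ℕ) : MeasurableSpace Ω :=
  ⨆ j ∈ Set.Iic k,
    (MeasurableSpace.comap (η j) inferInstance ⊔
      MeasurableSpace.comap (fun ω => η j ω • x j ω) inferInstance)

/-- The local-controller information σ-algebra
`F_k = σ(x_0, ω_0, …, ω_{k−1}, y_0, …, y_k)`. -/
def Fk {n : ℕ} (x0 : Ω → Fin n → ℝ) (w : ℕ → Ω → Fin n → ℝ)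
    (η : ℕ → Ω → ℝ) (x : ℕ → Ω → Fin n → ℝ) (k : ℕ) : MeasurableSpace Ω :=
  MeasurableSpace.comap x0 inferInstance ⊔
    (⨆ j ∈ Set.Iio k, MeasurableSpace.comap (w j) inferInstance) ⊔ GY η x k

/-- The family of σ-algebras generated by `x_0`, the noises `ω_k` and the channel
variables `η_k`, used to express their mutual independence. -/
def infoAlg {n : ℕ} (x0 : Ω → Fin n → ℝ) (w : ℕ → Ω → Fin n → ℝ)
    (η : ℕ → Ω → ℝ) : Option (ℕ ⊕ ℕ) → MeasurableSpace Ω :=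
  fun i =>
    Option.elim i (MeasurableSpace.comap x0 inferInstance)
      (Sum.elim (fun k => MeasurableSpace.comap (w k) inferInstance)
        (fun k => MeasurableSpace.comap (η k) inferInstance))


section Riccati

variable {ι κ 𝕜 : Type*} [Fintype ι] [CommRing 𝕜]

lemma _root_.Matrix.IsSymm.transpose_mul_mul {W : Matrix ι ι 𝕜} (hW : W.IsSymm) (B : Matrix ι κ 𝕜) :
    (Bᵀ * W * B).IsSymm := by
  simp [Matrix.IsSymm, Matrix.transpose_mul, hW.eq, Matrix.mul_assoc]

lemma riccati_mulVec_of_stationary [Fintype κ] [DecidableEq κ] (A W Q : Matrix ι ι 𝕜)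
    (B : Matrix ι κ 𝕜) (R : Matrix κ κ 𝕜) (hW : W.IsSymm) (hU : IsUnit (Bᵀ * W * B + R).det)
    {e : ι → 𝕜} {v : κ → 𝕜} (hv : Bᵀ *ᵥ (W *ᵥ (A *ᵥ e + B *ᵥ v)) + R *ᵥ v = 0) :
    (Aᵀ * W * A + Q - (Bᵀ * W * A)ᵀ * (Bᵀ * W * B + R)⁻¹ * (Bᵀ * W * A)) *ᵥ e
      = Aᵀ *ᵥ (W *ᵥ (A *ᵥ e + B *ᵥ v)) + Q *ᵥ e := by
  have hgain : (Bᵀ * W * A) *ᵥ e = -((Bᵀ * W * B + R) *ᵥ v) := by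
    rw [eq_neg_iff_add_eq_zero, ← hv]
    simp only [Matrix.add_mulVec, ← Matrix.mulVec_mulVec, Matrix.mulVec_add]
    abel
  have htr : (Bᵀ * W * A)ᵀ = Aᵀ * W * B := by
    rw [Matrix.transpose_mul, Matrix.transpose_mul, Matrix.transpose_transpose, hW.eq,
      Matrix.mul_assoc]
  rw [Matrix.sub_mulVec, ← Matrix.mulVec_mulVec, hgain, ← Matrix.mulVec_mulVec,
    Matrix.mulVec_neg, Matrix.mulVec_mulVec v, Matrix.nonsing_inv_mul _ hU,
    Matrix.one_mulVec, htr]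
  simp only [Matrix.add_mulVec, ← Matrix.mulVec_mulVec, Matrix.mulVec_add, Matrix.mulVec_neg]
  abel

end Riccati

namespace Sys

variable {n mL mR : ℕ} (S : Sys n mL mR)

def drift (x : Fin n → ℝ) (uL : Fin mL → ℝ) (uR : Fin mR → ℝ) : Fin n → ℝ :=
  S.A *ᵥ x + S.BL *ᵥ uL + S.BR *ᵥ uR

variable {S}

lemma Psi_isSymm {Z X : Matrix (Fin n) (Fin n) ℝ} (hZ : Z.IsSymm) (hX : X.IsSymm) :
    (S.Psi Z X).IsSymm :=
  (hZ.smul _).add (hX.smul _)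

lemma Ups_isSymm {Z : Matrix (Fin n) (Fin n) ℝ} (hZ : Z.IsSymm) (hRL : S.RL.IsSymm)
    (hRR : S.RR.IsSymm) : (S.Ups Z).IsSymm :=
  (hZ.transpose_mul_mul _).add (hRL.fromBlocks (by simp) hRR)

lemma ZX_isSymm {P : Matrix (Fin n) (Fin n) ℝ} (hQ : S.Q.IsSymm) (hRL : S.RL.IsSymm)
    (hRR : S.RR.IsSymm) (hP : P.IsSymm) (j : ℕ) :
    (S.ZX P j).1.IsSymm ∧ (S.ZX P j).2.IsSymm := by
  induction j with
  | zero => exact ⟨hP, hP⟩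
  | succ j ih =>
    have hΨ := Psi_isSymm (S := S) ih.1 ih.2
    exact ⟨((ih.1.transpose_mul_mul _).add hQ).sub
        ((Ups_isSymm ih.1 hRL hRR).transpose_mul_mul _),
      ((hΨ.transpose_mul_mul _).add hQ).sub
        (((hΨ.transpose_mul_mul _).add hRL).inv.transpose_mul_mul _)⟩

lemma Zstep_eq {Z : Matrix (Fin n) (Fin n) ℝ} (hUs : (S.Ups Z).IsSymm)
    (hU : IsUnit (S.Ups Z).det) :
    S.Zstep Z = S.Aᵀ * Z * S.A + S.Q
      - (S.Bcᵀ * Z * S.A)ᵀ * (S.Bcᵀ * Z * S.Bc + S.Rc)⁻¹ * (S.Bcᵀ * Z * S.A) := by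
  rw [Zstep, Kg, Matrix.transpose_mul, Matrix.transpose_nonsing_inv, hUs.eq,
    Matrix.mul_assoc (_ * _) (S.Ups Z), ← Matrix.mul_assoc (S.Ups Z),
    Matrix.mul_nonsing_inv _ hU, Matrix.one_mul]
  rfl

lemma Bc_transpose_mulVec_add_Rc_mulVec {z : Fin n → ℝ} {a : Fin mL → ℝ} {b : Fin mR → ℝ}
    (hL : S.BLᵀ *ᵥ z + S.RL *ᵥ a = 0) (hR : S.BRᵀ *ᵥ z + S.RR *ᵥ b = 0) :
    S.Bcᵀ *ᵥ z + S.Rc *ᵥ Sum.elim a b = 0 := by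
  rw [Bc, Matrix.transpose_fromCols, Matrix.fromRows_mulVec, Rc, Matrix.fromBlocks_mulVec]
  ext (i | i)
  · simpa using congrFun hL i
  · simpa using congrFun hR i

lemma drift_eq_add_Bc_mulVec (x : Fin n → ℝ) (uL : Fin mL → ℝ) (uR : Fin mR → ℝ) :
    S.drift x uL uR = S.A *ᵥ x + S.Bc *ᵥ Sum.elim uL uR := by
  rw [drift, Bc, Matrix.fromCols_mulVec_sumElim, add_assoc]

/-- `hL`, `hLh` and `hR` are the stationarity conditions of the local controller, of the local
controller averaged over the remote information, and of the remote controller. -/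
lemma costate_step {Z X : Matrix (Fin n) (Fin n) ℝ} (hZ : Z.IsSymm) (hX : X.IsSymm)
    (hRL : S.RL.IsSymm) (hRR : S.RR.IsSymm) (hUps : IsUnit (S.Ups Z).det)
    (hLam : IsUnit (S.Lam (S.Psi Z X)).det) {x xh : Fin n → ℝ} {uL uLh : Fin mL → ℝ}
    {uR : Fin mR → ℝ}
    (hL : S.BLᵀ *ᵥ (Z *ᵥ S.drift xh uLh uR + S.Psi Z X *ᵥ (S.drift x uL uR - S.drift xh uLh uR))
      + S.RL *ᵥ uL = 0)
    (hLh : S.BLᵀ *ᵥ (Z *ᵥ S.drift xh uLh uR) + S.RL *ᵥ uLh = 0)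
    (hR : S.BRᵀ *ᵥ (Z *ᵥ S.drift xh uLh uR) + S.RR *ᵥ uR = 0) :
    S.Zstep Z *ᵥ xh + S.Xstep (S.Psi Z X) *ᵥ (x - xh)
      = S.Aᵀ *ᵥ (Z *ᵥ S.drift xh uLh uR
          + S.Psi Z X *ᵥ (S.drift x uL uR - S.drift xh uLh uR)) + S.Q *ᵥ x := by
  have hinnov : S.drift x uL uR - S.drift xh uLh uR = S.A *ᵥ (x - xh) + S.BL *ᵥ (uL - uLh) := by
    simp only [drift, Matrix.mulVec_sub]
    abel
  have hZstep : S.Zstep Z *ᵥ xh = S.Aᵀ *ᵥ (Z *ᵥ S.drift xh uLh uR) + S.Q *ᵥ xh := by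
    rw [Zstep_eq (Ups_isSymm hZ hRL hRR) hUps, drift_eq_add_Bc_mulVec]
    refine riccati_mulVec_of_stationary _ _ _ _ _ hZ hUps ?_
    rw [← drift_eq_add_Bc_mulVec]
    exact Bc_transpose_mulVec_add_Rc_mulVec hLh hR
  have hXstep : S.Xstep (S.Psi Z X) *ᵥ (x - xh) = S.Aᵀ *ᵥ (S.Psi Z X *ᵥ
      (S.drift x uL uR - S.drift xh uLh uR)) + S.Q *ᵥ (x - xh) := by
    rw [hinnov]
    refine riccati_mulVec_of_stationary _ _ _ _ _ (Psi_isSymm hZ hX) hLam ?_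
    rw [← hinnov]
    simp only [Matrix.mulVec_add, Matrix.mulVec_sub] at hL hLh ⊢
    linear_combination (norm := module) hL - hLh
  rw [hZstep, hXstep]
  simp only [Matrix.mulVec_add, Matrix.mulVec_sub]
  abel

end Sys

section CondExp

variable {Ω' E : Type*} {m mG m₀ : MeasurableSpace Ω'} {μ : Measure Ω'}

lemma integrable_mulVec {ι κ : Type*} [Fintype ι] [Fintype κ] (M : Matrix κ ι ℝ) {f : Ω' → ι → ℝ}
    (hf : Integrable f μ) : Integrable (fun ω => M *ᵥ f ω) μ :=
  (LinearMap.toContinuousLinearMap M.mulVecLin).integrable_comp hf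

lemma measurable_mulVec {ι κ : Type*} [Fintype ι] [Fintype κ] (M : Matrix κ ι ℝ)
    {f : Ω' → ι → ℝ} (hf : Measurable[m] f) : Measurable[m] (fun ω => M *ᵥ f ω) :=
  (LinearMap.toContinuousLinearMap M.mulVecLin).measurable.comp hf

lemma stronglyMeasurable_mulVec {ι κ : Type*} [Fintype ι] [Fintype κ] (M : Matrix κ ι ℝ)
    {f : Ω' → ι → ℝ} (hf : StronglyMeasurable[m] f) :
    StronglyMeasurable[m] (fun ω => M *ᵥ f ω) :=
  (LinearMap.toContinuousLinearMap M.mulVecLin).continuous.comp_stronglyMeasurable hf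

lemma condExp_mulVec {ι κ : Type*} [Fintype ι] [Fintype κ] (M : Matrix κ ι ℝ)
    {f : Ω' → ι → ℝ} (hf : Integrable f μ) :
    μ[fun ω => M *ᵥ f ω | m] =ᵐ[μ] fun ω => M *ᵥ μ[f | m] ω :=
  ((LinearMap.toContinuousLinearMap M.mulVecLin).comp_condExp_comm hf).symm

lemma memLp_top_of_zero_or_one {θ : Ω' → ℝ} (hθ : AEStronglyMeasurable θ μ)
    (h01 : ∀ ω, θ ω = 0 ∨ θ ω = 1) : MemLp θ ⊤ μ :=
  memLp_top_of_bound hθ 1 (ae_of_all _ fun ω => by rcases h01 ω with h | h <;> simp [h])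

lemma integral_eq_measureReal_of_zero_or_one {θ : Ω' → ℝ} (hθ : Measurable θ)
    (h01 : ∀ ω, θ ω = 0 ∨ θ ω = 1) : ∫ ω, θ ω ∂μ = μ.real {ω | θ ω = 1} := by
  have hθ_eq : θ = {ω | θ ω = 1}.indicator 1 := by
    funext ω
    rcases h01 ω with h | h <;> simp [h]
  conv_lhs => rw [hθ_eq]
  exact integral_indicator_one (hθ (measurableSet_singleton 1))

variable [NormedAddCommGroup E] [NormedSpace ℝ E] [MeasurableSpace E] [BorelSpace E]

lemma setIntegral_smul_eq_of_indep (hmG : mG ≤ m₀) {ξ : Ω' → ℝ} (hξ : AEStronglyMeasurable ξ μ)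
    (hind : Indep (MeasurableSpace.comap ξ inferInstance) mG μ) {v : Ω' → E}
    (hv : StronglyMeasurable[mG] v) {s : Set Ω'} (hs : MeasurableSet[mG] s) :
    ∫ ω in s, ξ ω • v ω ∂μ = (∫ ω, ξ ω ∂μ) • ∫ ω in s, v ω ∂μ := by
  have hsv : StronglyMeasurable[mG] (s.indicator v) := hv.indicator hs
  have hindep : IndepFun ξ (s.indicator v) μ :=
    (IndepFun_iff_Indep _ _ _).2 (indep_of_indep_of_le_right hind hsv.measurable.comap_le)
  rw [← integral_indicator (hmG s hs), ← integral_indicator (hmG s hs), Set.indicator_smul]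
  exact hindep.integral_fun_smul_eq_smul_integral hξ (hsv.mono hmG).aestronglyMeasurable

variable [CompleteSpace E]

lemma condExp_smul_of_indep [IsFiniteMeasure μ] (hm : m ≤ mG) (hmG : mG ≤ m₀) {ξ : Ω' → ℝ}
    (hξ : MemLp ξ ⊤ μ) (hind : Indep (MeasurableSpace.comap ξ inferInstance) mG μ)
    {v : Ω' → E} (hv : StronglyMeasurable[mG] v) (hvi : Integrable v μ) :
    μ[fun ω => ξ ω • v ω | m] =ᵐ[μ] fun ω => (∫ ω', ξ ω' ∂μ) • μ[v | m] ω := by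
  refine (ae_eq_condExp_of_forall_setIntegral_eq (hm.trans hmG) (hvi.smul_of_top_right hξ)
    (fun s _ _ => (integrable_condExp.smul _).integrableOn) (fun s hs _ => ?_)
    (stronglyMeasurable_condExp.const_smul _).aestronglyMeasurable).symm
  simp only [Pi.smul_apply]
  rw [integral_smul, setIntegral_condExp (hm.trans hmG) hvi hs]
  exact (setIntegral_smul_eq_of_indep hmG hξ.1 hind hv (hm s hs)).symm

end CondExp

lemma exists_measurableSet_inter_eq_of_const {Ω' β : Type*} {m : MeasurableSpace Ω'}
    [MeasurableSpace β] {f : Ω' → β} {T : Set Ω'} {c : β} (hf : ∀ ω ∈ T, f ω = c) {s : Set Ω'}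
    (hs : MeasurableSet[m ⊔ MeasurableSpace.comap f inferInstance] s) :
    ∃ A, MeasurableSet[m] A ∧ s ∩ T = A ∩ T := by
  let mT : MeasurableSpace Ω' :=
    { MeasurableSet' := fun s => ∃ A, MeasurableSet[m] A ∧ s ∩ T = A ∩ T
      measurableSet_empty := ⟨∅, MeasurableSet.empty, rfl⟩
      measurableSet_compl := by
        rintro s ⟨A, hA, hsA⟩
        refine ⟨Aᶜ, hA.compl, Set.ext fun ω => ?_⟩
        have := Set.ext_iff.1 hsA ω
        simp only [Set.mem_inter_iff, Set.mem_compl_iff] at this ⊢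
        tauto
      measurableSet_iUnion := by
        intro s hs
        choose A hA hsA using hs
        exact ⟨⋃ i, A i, MeasurableSet.iUnion hA, by
          simp only [Set.iUnion_inter, hsA]⟩ }
  have hf_le : MeasurableSpace.comap f inferInstance ≤ mT := by
    rintro _ ⟨U, -, rfl⟩
    by_cases hc : c ∈ U
    · exact ⟨Set.univ, @MeasurableSet.univ _ m, Set.ext fun ω => by
        simp +contextual [hf ω, hc]⟩
    · refine ⟨∅, @MeasurableSet.empty _ m, Set.ext fun ω => ?_⟩
      simp only [Set.mem_inter_iff, Set.mem_preimage, Set.empty_inter, Set.mem_empty_iff_false,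
        iff_false, not_and]
      exact fun hfU hT => hc (hf ω hT ▸ hfU)
  exact sup_le (fun A hA => ⟨A, hA, rfl⟩) hf_le s hs

section Observation

variable {Ω' : Type*} {n : ℕ} {η : ℕ → Ω' → ℝ} {x : ℕ → Ω' → Fin n → ℝ}

lemma GY_mono {j k : ℕ} (hjk : j ≤ k) : GY η x j ≤ GY η x k :=
  biSup_mono fun _ hi => Set.mem_Iic.2 ((Set.mem_Iic.1 hi).trans hjk)

lemma GY_le_of_measurable {m : MeasurableSpace Ω'} {k : ℕ} (hη : ∀ j ≤ k, Measurable[m] (η j))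
    (hx : ∀ j ≤ k, Measurable[m] (x j)) : GY η x k ≤ m :=
  iSup₂_le fun j hj => sup_le (hη j hj).comap_le ((hη j hj).smul (hx j hj)).comap_le

lemma GY_le_Fk {x0 : Ω' → Fin n → ℝ} {w : ℕ → Ω' → Fin n → ℝ} (k : ℕ) :
    GY η x k ≤ Fk x0 w η x k :=
  le_sup_right

lemma Fk_mono {x0 : Ω' → Fin n → ℝ} {w : ℕ → Ω' → Fin n → ℝ} {j k : ℕ} (hjk : j ≤ k) :
    Fk x0 w η x j ≤ Fk x0 w η x k :=
  sup_le_sup (sup_le_sup le_rfl (biSup_mono fun _ hi => Set.mem_Iio.2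
    ((Set.mem_Iio.1 hi).trans_le hjk))) (GY_mono hjk)

lemma measurable_w_Fk {x0 : Ω' → Fin n → ℝ} {w : ℕ → Ω' → Fin n → ℝ} (k : ℕ) :
    Measurable[Fk x0 w η x (k + 1)] (w k) :=
  Measurable.of_comap_le <|
    (le_iSup₂ (f := fun j (_ : j ∈ Set.Iio (k + 1)) => MeasurableSpace.comap (w j) inferInstance)
      k (Set.mem_Iio.2 k.lt_succ_self)).trans (le_sup_right.trans le_sup_left)

lemma GY_succ (k : ℕ) :
    GY η x (k + 1) = GY η x k ⊔
      MeasurableSpace.comap (fun ω => (η (k + 1) ω, η (k + 1) ω • x (k + 1) ω)) inferInstance := by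
  have hIic : Set.Iic (k + 1) = insert (k + 1) (Set.Iic k) := by
    ext j; simp [Nat.le_succ_iff, or_comm]
  rw [GY, GY, hIic, iSup_insert, sup_comm, ← MeasurableSpace.comap_prodMk]
  rfl

lemma condExp_GY_succ {mG m₀ : MeasurableSpace Ω'} {μ : Measure Ω'} [IsFiniteMeasure μ]
    (k : ℕ) (hmG : mG ≤ m₀) (hYG : GY η x k ≤ mG) (hxG : Measurable[mG] (x (k + 1)))
    (hη : Measurable (η (k + 1))) (hη01 : ∀ ω, η (k + 1) ω = 0 ∨ η (k + 1) ω = 1)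
    (hind : Indep (MeasurableSpace.comap (η (k + 1)) inferInstance) mG μ)
    (hx : Integrable (x (k + 1)) μ) :
    μ[x (k + 1) | GY η x (k + 1)] =ᵐ[μ] fun ω =>
      η (k + 1) ω • x (k + 1) ω + (1 - η (k + 1) ω) • μ[x (k + 1) | GY η x k] ω := by
  set xh := μ[x (k + 1) | GY η x k]
  have hY : GY η x k ≤ m₀ := hYG.trans hmG
  have hobs : Measurable[GY η x (k + 1)]
      (fun ω => (η (k + 1) ω, η (k + 1) ω • x (k + 1) ω)) := by
    rw [GY_succ]; exact Measurable.of_comap_le le_sup_right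
  have hY1 : GY η x (k + 1) ≤ m₀ := by
    rw [GY_succ]
    exact sup_le hY (hη.prodMk (hη.smul (hxG.mono hmG le_rfl))).comap_le
  have hηL : MemLp (η (k + 1)) ⊤ μ := memLp_top_of_zero_or_one hη.aestronglyMeasurable hη01
  have h1ηL : MemLp (fun ω => 1 - η (k + 1) ω) ⊤ μ := (memLp_const 1).sub hηL
  have hgi : Integrable (fun ω => η (k + 1) ω • x (k + 1) ω + (1 - η (k + 1) ω) • xh ω) μ :=
    (hx.smul_of_top_right hηL).add (integrable_condExp.smul_of_top_right h1ηL)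
  refine (ae_eq_condExp_of_forall_setIntegral_eq hY1 hx (fun s _ _ => hgi.integrableOn)
    (fun s hs _ => ?_) ?_).symm
  · rw [GY_succ] at hs
    obtain ⟨A, hA, hsA⟩ := exists_measurableSet_inter_eq_of_const
      (T := {ω | η (k + 1) ω = 0}) (c := (0, 0)) (fun ω (hω : η (k + 1) ω = 0) => by simp [hω]) hs
    -- off `{η = 0}` the integrand below vanishes, and on it `s` and `A` agree
    have hsA_ind : s.indicator (fun ω => (1 - η (k + 1) ω) • (x (k + 1) ω - xh ω))
        = A.indicator (fun ω => (1 - η (k + 1) ω) • (x (k + 1) ω - xh ω)) := by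
      classical
      funext ω
      rcases hη01 ω with h | h
      · have hmem : ω ∈ s ↔ ω ∈ A := by simpa [h] using Set.ext_iff.1 hsA ω
        simp only [Set.indicator_apply, hmem]
      · simp [Set.indicator_apply, h]
    have h1η_ind : Indep (MeasurableSpace.comap (fun ω => 1 - η (k + 1) ω) inferInstance) mG μ :=
      indep_of_indep_of_le_left hind
        (measurable_const.sub (comap_measurable (η (k + 1)))).comap_le
    have hv : StronglyMeasurable[mG] (fun ω => x (k + 1) ω - xh ω) :=
      hxG.stronglyMeasurable.sub (stronglyMeasurable_condExp.mono hYG)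
    have hzero : ∫ ω in s, (1 - η (k + 1) ω) • (x (k + 1) ω - xh ω) ∂μ = 0 := by
      rw [← integral_indicator (hY1 s (GY_succ (η := η) (x := x) k ▸ hs)), hsA_ind,
        integral_indicator (hY A hA), setIntegral_smul_eq_of_indep hmG h1ηL.1 h1η_ind hv (hYG A hA),
        integral_sub hx.integrableOn integrable_condExp.integrableOn,
        setIntegral_condExp hY hx hA, sub_self, smul_zero]
    rw [← sub_eq_zero, ← integral_sub hgi.integrableOn hx.integrableOn, ← neg_eq_zero,
      ← integral_neg, ← hzero]
    congr 1
    funext ω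
    simp only [neg_sub]
    module
  · have hη' : Measurable[GY η x (k + 1)] (η (k + 1)) := measurable_fst.comp hobs
    have hηx : Measurable[GY η x (k + 1)] (fun ω => η (k + 1) ω • x (k + 1) ω) :=
      measurable_snd.comp hobs
    exact (hηx.stronglyMeasurable.add ((measurable_const.sub hη').stronglyMeasurable.smul
      (stronglyMeasurable_condExp.mono (GY_mono (Nat.le_succ k))))).aestronglyMeasurable

end Observation

section Primitive

variable {Ω' : Type*} {n : ℕ} {x0 : Ω' → Fin n → ℝ} {w : ℕ → Ω' → Fin n → ℝ}
  {η : ℕ → Ω' → ℝ}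

/-- The indices in `infoAlg` of `x_0`, of `ω_j` for `j < k` and of `η_j` for `j ≤ k`. -/
def IsPastIdx (k : ℕ) : Option (ℕ ⊕ ℕ) → Prop
  | none => True
  | some (Sum.inl j) => j < k
  | some (Sum.inr j) => j ≤ k

/-- `σ(x_0, ω_0, …, ω_{k−1}, η_0, …, η_k)`: everything the closed loop at time `k` can depend
on. -/
def primitiveAlg (x0 : Ω' → Fin n → ℝ) (w : ℕ → Ω' → Fin n → ℝ) (η : ℕ → Ω' → ℝ) (k : ℕ) :
    MeasurableSpace Ω' :=
  ⨆ i ∈ {i | IsPastIdx k i}, infoAlg x0 w η i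

lemma infoAlg_le_primitiveAlg {k : ℕ} {i : Option (ℕ ⊕ ℕ)} (hi : IsPastIdx k i) :
    infoAlg x0 w η i ≤ primitiveAlg x0 w η k :=
  le_iSup₂ (f := fun i (_ : i ∈ {i | IsPastIdx k i}) => infoAlg x0 w η i) i hi

lemma primitiveAlg_mono {j k : ℕ} (hjk : j ≤ k) :
    primitiveAlg x0 w η j ≤ primitiveAlg x0 w η k :=
  iSup₂_le fun i hi => infoAlg_le_primitiveAlg <| by
    rcases i with _ | i | i <;> simp_all [IsPastIdx] <;> omega

lemma infoAlg_le {m₀ : MeasurableSpace Ω'} (hx0 : Measurable x0) (hw : ∀ k, Measurable (w k))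
    (hη : ∀ k, Measurable (η k)) : ∀ i, infoAlg x0 w η i ≤ m₀
  | none => hx0.comap_le
  | some (.inl j) => (hw j).comap_le
  | some (.inr j) => (hη j).comap_le

lemma primitiveAlg_le {m₀ : MeasurableSpace Ω'} (hx0 : Measurable x0)
    (hw : ∀ k, Measurable (w k)) (hη : ∀ k, Measurable (η k)) (k : ℕ) :
    primitiveAlg x0 w η k ≤ m₀ :=
  iSup₂_le fun i _ => infoAlg_le hx0 hw hη i

lemma Fk_le_primitiveAlg_of_measurable {x : ℕ → Ω' → Fin n → ℝ} {k : ℕ}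
    (hx : ∀ j ≤ k, Measurable[primitiveAlg x0 w η j] (x j)) :
    Fk x0 w η x k ≤ primitiveAlg x0 w η k :=
  sup_le (sup_le (infoAlg_le_primitiveAlg (i := none) trivial)
    (iSup₂_le fun j hj => infoAlg_le_primitiveAlg (i := some (.inl j)) hj))
    (GY_le_of_measurable
      (fun j hj => Measurable.of_comap_le (infoAlg_le_primitiveAlg (i := some (.inr j)) hj))
      (fun j hj => (hx j hj).mono (primitiveAlg_mono hj) le_rfl))

lemma indep_infoAlg_biSup {m₀ : MeasurableSpace Ω'} {μ : Measure Ω'} (hx0 : Measurable x0)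
    (hw : ∀ k, Measurable (w k)) (hη : ∀ k, Measurable (η k))
    (hindep : iIndep (infoAlg x0 w η) μ) {i : Option (ℕ ⊕ ℕ)} {U : Set (Option (ℕ ⊕ ℕ))}
    (hi : i ∉ U) : Indep (infoAlg x0 w η i) (⨆ j ∈ U, infoAlg x0 w η j) μ :=
  indep_of_indep_of_le_left
    (indep_iSup_of_disjoint (infoAlg_le hx0 hw hη) hindep (Set.disjoint_singleton_left.2 hi))
    (le_iSup₂ (f := fun j (_ : j ∈ ({i} : Set _)) => infoAlg x0 w η j) i rfl)

end Primitive

namespace Sys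

variable {Ω' : Type*} {n mL mR : ℕ} (S : Sys n mL mR) {m m₀ : MeasurableSpace Ω'}
  {f : Ω' → Fin n → ℝ} {g : Ω' → Fin mL → ℝ} {h : Ω' → Fin mR → ℝ}

lemma measurable_drift (hf : Measurable[m] f) (hg : Measurable[m] g) (hh : Measurable[m] h) :
    Measurable[m] (fun ω => S.drift (f ω) (g ω) (h ω)) :=
  ((measurable_mulVec S.A hf).add (measurable_mulVec S.BL hg)).add (measurable_mulVec S.BR hh)

variable {μ : Measure Ω'}

lemma integrable_drift (hf : Integrable f μ) (hg : Integrable g μ) (hh : Integrable h μ) :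
    Integrable (fun ω => S.drift (f ω) (g ω) (h ω)) μ :=
  ((integrable_mulVec S.A hf).add (integrable_mulVec S.BL hg)).add (integrable_mulVec S.BR hh)

lemma condExp_drift [IsFiniteMeasure μ] (hm : m ≤ m₀) (hf : Integrable f μ)
    (hg : Integrable g μ) (hh : StronglyMeasurable[m] h) (hhi : Integrable h μ) :
    μ[fun ω => S.drift (f ω) (g ω) (h ω) | m] =ᵐ[μ]
      fun ω => S.drift (μ[f | m] ω) (μ[g | m] ω) (h ω) := by
  have hAf := integrable_mulVec S.A hf
  have hBg := integrable_mulVec S.BL hg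
  have hBh := integrable_mulVec S.BR hhi
  filter_upwards [condExp_add (hAf.add hBg) hBh m, condExp_add hAf hBg m,
    condExp_mulVec S.A hf (m := m), condExp_mulVec S.BL hg (m := m)] with ω h1 h2 h3 h4
  change μ[(fun ω => S.A *ᵥ f ω) + (fun ω => S.BL *ᵥ g ω) + fun ω => S.BR *ᵥ h ω | m] ω = _
  rw [h1, Pi.add_apply, h2, Pi.add_apply, h3, h4,
    condExp_of_stronglyMeasurable hm (stronglyMeasurable_mulVec S.BR hh) hBh]
  rfl

end Sys

/-- The standing assumptions on the networked control system. -/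
structure ClosedLoop {n mL mR : ℕ} (S : Sys n mL mR) (μ : Measure Ω) (x0 : Ω → Fin n → ℝ)
    (w : ℕ → Ω → Fin n → ℝ) (η : ℕ → Ω → ℝ) (x : ℕ → Ω → Fin n → ℝ)
    (uL : ℕ → Ω → Fin mL → ℝ) (uR : ℕ → Ω → Fin mR → ℝ) : Prop where
  measurable_x0 : Measurable x0
  measurable_w : ∀ k, Measurable (w k)
  measurable_η : ∀ k, Measurable (η k)
  η_eq_zero_or_one : ∀ k ω, η k ω = 0 ∨ η k ω = 1
  measure_η_eq_one : ∀ k, μ {ω | η k ω = 1} = ENNReal.ofReal (1 - S.p)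
  p_le_one : S.p ≤ 1
  iIndep : iIndep (infoAlg x0 w η) μ
  integral_w : ∀ k, ∫ ω, w k ω ∂μ = 0
  integrable_w : ∀ k, Integrable (w k) μ
  integrable_x : ∀ k, Integrable (x k) μ
  integrable_uL : ∀ k, Integrable (uL k) μ
  integrable_uR : ∀ k, Integrable (uR k) μ
  x_zero : x 0 = x0
  x_succ : ∀ k ω, x (k + 1) ω = S.drift (x k ω) (uL k ω) (uR k ω) + w k ω
  stronglyMeasurable_uR : ∀ k, StronglyMeasurable[GY η x k] (uR k)
  stronglyMeasurable_uL : ∀ k, StronglyMeasurable[Fk x0 w η x k] (uL k)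

/-- The candidate costate `λ_{k−1} = Z x̂_{k|k} + X x̃_k`. -/
def costate {n : ℕ} (μ : Measure Ω) (η : ℕ → Ω → ℝ) (x : ℕ → Ω → Fin n → ℝ)
    (Z X : Matrix (Fin n) (Fin n) ℝ) (k : ℕ) : Ω → Fin n → ℝ :=
  fun ω => Z *ᵥ μ[x k | GY η x k] ω + X *ᵥ (x k ω - μ[x k | GY η x k] ω)

namespace ClosedLoop

variable {n mL mR : ℕ} {S : Sys n mL mR} {μ : Measure Ω} {x0 : Ω → Fin n → ℝ}
  {w : ℕ → Ω → Fin n → ℝ} {η : ℕ → Ω → ℝ} {x : ℕ → Ω → Fin n → ℝ}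
  {uL : ℕ → Ω → Fin mL → ℝ} {uR : ℕ → Ω → Fin mR → ℝ}

lemma x_succ_eq (h : ClosedLoop S μ x0 w η x uL uR) (k : ℕ) :
    x (k + 1) = (fun ω => S.drift (x k ω) (uL k ω) (uR k ω)) + w k :=
  funext (h.x_succ k)

lemma measurable_drift_of_measurable_x (h : ClosedLoop S μ x0 w η x uL uR) {k : ℕ}
    (hx : Measurable[Fk x0 w η x k] (x k)) :
    Measurable[Fk x0 w η x k] (fun ω => S.drift (x k ω) (uL k ω) (uR k ω)) :=
  S.measurable_drift hx (h.stronglyMeasurable_uL k).measurable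
    ((h.stronglyMeasurable_uR k).measurable.mono (GY_le_Fk k) le_rfl)

lemma measurable_x_Fk (h : ClosedLoop S μ x0 w η x uL uR) (k : ℕ) :
    Measurable[Fk x0 w η x k] (x k) := by
  induction k with
  | zero => rw [h.x_zero]; exact Measurable.of_comap_le (le_sup_left.trans le_sup_left)
  | succ k ih =>
    rw [h.x_succ_eq]
    exact ((h.measurable_drift_of_measurable_x ih).mono (Fk_mono k.le_succ) le_rfl).add
      (measurable_w_Fk k)

lemma measurable_drift (h : ClosedLoop S μ x0 w η x uL uR) (k : ℕ) :
    Measurable[Fk x0 w η x k] (fun ω => S.drift (x k ω) (uL k ω) (uR k ω)) :=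
  h.measurable_drift_of_measurable_x (h.measurable_x_Fk k)

lemma measurable_x_succ (h : ClosedLoop S μ x0 w η x uL uR) (k : ℕ) :
    Measurable[Fk x0 w η x k ⊔ MeasurableSpace.comap (w k) inferInstance] (x (k + 1)) := by
  rw [h.x_succ_eq]
  exact ((h.measurable_drift k).mono le_sup_left le_rfl).add
    (Measurable.of_comap_le le_sup_right)

lemma measurable_x_primitiveAlg (h : ClosedLoop S μ x0 w η x uL uR) (k : ℕ) :
    Measurable[primitiveAlg x0 w η k] (x k) := by
  induction k using Nat.strong_induction_on with
  | _ k ih =>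
    cases k with
    | zero =>
      rw [h.x_zero]
      exact Measurable.of_comap_le (infoAlg_le_primitiveAlg (i := none) trivial)
    | succ k =>
      exact (h.measurable_x_succ k).mono (sup_le
        ((Fk_le_primitiveAlg_of_measurable fun j hj => ih j (by omega)).trans
          (primitiveAlg_mono k.le_succ))
        (infoAlg_le_primitiveAlg (i := some (.inl k)) k.lt_succ_self)) le_rfl

lemma Fk_le_primitiveAlg (h : ClosedLoop S μ x0 w η x uL uR) (k : ℕ) :
    Fk x0 w η x k ≤ primitiveAlg x0 w η k :=
  Fk_le_primitiveAlg_of_measurable fun j _ => h.measurable_x_primitiveAlg j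

lemma Fk_le (h : ClosedLoop S μ x0 w η x uL uR) (k : ℕ) :
    Fk x0 w η x k ≤ ‹MeasurableSpace Ω› :=
  (h.Fk_le_primitiveAlg k).trans (primitiveAlg_le h.measurable_x0 h.measurable_w h.measurable_η k)

lemma GY_le (h : ClosedLoop S μ x0 w η x uL uR) (k : ℕ) : GY η x k ≤ ‹MeasurableSpace Ω› :=
  (GY_le_Fk k).trans (h.Fk_le k)

lemma le_primitiveAlg_sup_w (h : ClosedLoop S μ x0 w η x uL uR) (k : ℕ) :
    Fk x0 w η x k ⊔ MeasurableSpace.comap (w k) inferInstance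
      ≤ primitiveAlg x0 w η k ⊔ MeasurableSpace.comap (w k) inferInstance :=
  sup_le_sup_right (h.Fk_le_primitiveAlg k) _

lemma primitiveAlg_sup_w_le (h : ClosedLoop S μ x0 w η x uL uR) (k : ℕ) :
    primitiveAlg x0 w η k ⊔ MeasurableSpace.comap (w k) inferInstance ≤ ‹MeasurableSpace Ω› :=
  sup_le (primitiveAlg_le h.measurable_x0 h.measurable_w h.measurable_η k)
    (h.measurable_w k).comap_le

lemma integral_η (h : ClosedLoop S μ x0 w η x uL uR) (k : ℕ) : ∫ ω, η k ω ∂μ = 1 - S.p := by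
  rw [integral_eq_measureReal_of_zero_or_one (h.measurable_η k) (h.η_eq_zero_or_one k),
    measureReal_def, h.measure_η_eq_one k, ENNReal.toReal_ofReal (by linarith [h.p_le_one])]

lemma integrable_costate (h : ClosedLoop S μ x0 w η x uL uR) (Z X : Matrix (Fin n) (Fin n) ℝ)
    (k : ℕ) : Integrable (costate μ η x Z X k) μ :=
  (integrable_mulVec Z integrable_condExp).add
    (integrable_mulVec X ((h.integrable_x k).sub integrable_condExp))

lemma indep_w_primitiveAlg (h : ClosedLoop S μ x0 w η x uL uR) (k : ℕ) :
    Indep (MeasurableSpace.comap (w k) inferInstance) (primitiveAlg x0 w η k) μ :=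
  indep_infoAlg_biSup (i := some (.inl k)) h.measurable_x0 h.measurable_w h.measurable_η
    h.iIndep (by simp [IsPastIdx])

lemma indep_η_succ (h : ClosedLoop S μ x0 w η x uL uR) (k : ℕ) :
    Indep (MeasurableSpace.comap (η (k + 1)) inferInstance)
      (primitiveAlg x0 w η k ⊔ MeasurableSpace.comap (w k) inferInstance) μ := by
  refine indep_of_indep_of_le_right (indep_infoAlg_biSup (i := some (.inr (k + 1)))
    (U := {i | IsPastIdx k i ∨ i = some (.inl k)}) h.measurable_x0 h.measurable_w
    h.measurable_η h.iIndep (by simp [IsPastIdx])) (sup_le ?_ ?_)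
  · exact biSup_mono fun i hi => Or.inl hi
  · exact le_iSup₂ (f := fun i (_ : i ∈ {i | IsPastIdx k i ∨ i = some (.inl k)}) =>
      infoAlg x0 w η i) (some (.inl k)) (Or.inr rfl)

variable [IsProbabilityMeasure μ]

lemma condExp_x_succ_Fk (h : ClosedLoop S μ x0 w η x uL uR) (k : ℕ) :
    μ[x (k + 1) | Fk x0 w η x k] =ᵐ[μ] fun ω => S.drift (x k ω) (uL k ω) (uR k ω) := by
  have hdrift := S.integrable_drift (h.integrable_x k) (h.integrable_uL k) (h.integrable_uR k)
  have hw : μ[w k | Fk x0 w η x k] =ᵐ[μ] 0 := by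
    have := condExp_indep_eq (h.measurable_w k).comap_le (h.Fk_le k)
      (comap_measurable (w k)).stronglyMeasurable
      (indep_of_indep_of_le_right (h.indep_w_primitiveAlg k) (h.Fk_le_primitiveAlg k))
    rwa [h.integral_w] at this
  rw [h.x_succ_eq]
  filter_upwards [condExp_add hdrift (h.integrable_w k) (Fk x0 w η x k), hw] with ω h1 h2
  rw [h1, Pi.add_apply, condExp_of_stronglyMeasurable (h.Fk_le k)
    (h.measurable_drift k).stronglyMeasurable hdrift, h2, Pi.zero_apply, add_zero]

lemma condExp_x_succ_GY (h : ClosedLoop S μ x0 w η x uL uR) (k : ℕ) :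
    μ[x (k + 1) | GY η x k] =ᵐ[μ]
      fun ω => S.drift (μ[x k | GY η x k] ω) (μ[uL k | GY η x k] ω) (uR k ω) :=
  (condExp_condExp_of_le (GY_le_Fk k) (h.Fk_le k)).symm.trans <|
    (condExp_congr_ae (h.condExp_x_succ_Fk k)).trans <|
      S.condExp_drift (h.GY_le k) (h.integrable_x k) (h.integrable_uL k)
        (h.stronglyMeasurable_uR k) (h.integrable_uR k)

lemma error_succ (h : ClosedLoop S μ x0 w η x uL uR) (k : ℕ) :
    x (k + 1) - μ[x (k + 1) | GY η x (k + 1)] =ᵐ[μ]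
      fun ω => (1 - η (k + 1) ω) • (x (k + 1) - μ[x (k + 1) | GY η x k]) ω := by
  filter_upwards [condExp_GY_succ k (h.primitiveAlg_sup_w_le k)
    ((GY_le_Fk k).trans ((h.Fk_le_primitiveAlg k).trans le_sup_left))
    ((h.measurable_x_succ k).mono (h.le_primitiveAlg_sup_w k) le_rfl) (h.measurable_η _)
    (h.η_eq_zero_or_one _) (h.indep_η_succ k) (h.integrable_x _)] with ω hω
  rw [Pi.sub_apply, hω, Pi.sub_apply]
  module

lemma condExp_error_succ_Fk (h : ClosedLoop S μ x0 w η x uL uR) (k : ℕ) :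
    μ[x (k + 1) - μ[x (k + 1) | GY η x (k + 1)] | Fk x0 w η x k] =ᵐ[μ] fun ω =>
      S.p • (S.drift (x k ω) (uL k ω) (uR k ω)
        - S.drift (μ[x k | GY η x k] ω) (μ[uL k | GY η x k] ω) (uR k ω)) := by
  have hFG : Fk x0 w η x k ≤ primitiveAlg x0 w η k ⊔ MeasurableSpace.comap (w k) inferInstance :=
    le_sup_left.trans (h.le_primitiveAlg_sup_w k)
  have hηL : MemLp (η (k + 1)) ⊤ μ :=
    memLp_top_of_zero_or_one (h.measurable_η _).aestronglyMeasurable (h.η_eq_zero_or_one _)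
  have hξ : MemLp (fun ω => 1 - η (k + 1) ω) ⊤ μ := (memLp_const 1).sub hηL
  have hξ_ind : Indep (MeasurableSpace.comap (fun ω => 1 - η (k + 1) ω) inferInstance)
      (primitiveAlg x0 w η k ⊔ MeasurableSpace.comap (w k) inferInstance) μ :=
    indep_of_indep_of_le_left (h.indep_η_succ k)
      (measurable_const.sub (comap_measurable (η (k + 1)))).comap_le
  have hv : StronglyMeasurable[primitiveAlg x0 w η k ⊔ MeasurableSpace.comap (w k) inferInstance]
      (x (k + 1) - μ[x (k + 1) | GY η x k]) :=
    ((h.measurable_x_succ k).mono (h.le_primitiveAlg_sup_w k) le_rfl).stronglyMeasurable.sub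
      (stronglyMeasurable_condExp.mono ((GY_le_Fk k).trans hFG))
  have hp : ∫ ω, (1 - η (k + 1) ω) ∂μ = S.p := by
    rw [integral_sub (integrable_const 1) (hηL.integrable le_top), h.integral_η]
    simp
  have hv_cond : μ[x (k + 1) - μ[x (k + 1) | GY η x k] | Fk x0 w η x k] =ᵐ[μ] fun ω =>
      S.drift (x k ω) (uL k ω) (uR k ω)
        - S.drift (μ[x k | GY η x k] ω) (μ[uL k | GY η x k] ω) (uR k ω) := by
    filter_upwards [condExp_sub (h.integrable_x _) integrable_condExp (Fk x0 w η x k),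
      h.condExp_x_succ_Fk k, h.condExp_x_succ_GY k] with ω h1 h2 h3
    rw [h1, Pi.sub_apply, h2, condExp_of_stronglyMeasurable (h.Fk_le k)
      (stronglyMeasurable_condExp.mono (GY_le_Fk k)) integrable_condExp, h3]
  refine (condExp_congr_ae (h.error_succ k)).trans ?_
  filter_upwards [condExp_smul_of_indep hFG (h.primitiveAlg_sup_w_le k) hξ hξ_ind hv
    ((h.integrable_x _).sub integrable_condExp), hv_cond] with ω h1 h2
  rw [h1, hp, h2]

lemma condExp_costate_Fk (h : ClosedLoop S μ x0 w η x uL uR) (Z X : Matrix (Fin n) (Fin n) ℝ)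
    (k : ℕ) :
    μ[costate μ η x Z X (k + 1) | Fk x0 w η x k] =ᵐ[μ] fun ω =>
      Z *ᵥ S.drift (μ[x k | GY η x k] ω) (μ[uL k | GY η x k] ω) (uR k ω)
        + S.Psi Z X *ᵥ (S.drift (x k ω) (uL k ω) (uR k ω)
          - S.drift (μ[x k | GY η x k] ω) (μ[uL k | GY η x k] ω) (uR k ω)) := by
  have herr := (h.integrable_x (k + 1)).sub
    (integrable_condExp (f := x (k + 1)) (m := GY η x (k + 1)))
  have hsplit : costate μ η x Z X (k + 1) = (fun ω => Z *ᵥ x (k + 1) ω)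
      + fun ω => (X - Z) *ᵥ (x (k + 1) - μ[x (k + 1) | GY η x (k + 1)]) ω := by
    funext ω
    simp only [costate, Pi.add_apply, Pi.sub_apply, Matrix.sub_mulVec, Matrix.mulVec_sub]
    abel
  rw [hsplit]
  filter_upwards [condExp_add (integrable_mulVec Z (h.integrable_x _))
      (integrable_mulVec (X - Z) herr) (Fk x0 w η x k),
    condExp_mulVec Z (h.integrable_x (k + 1)) (m := Fk x0 w η x k),
    condExp_mulVec (X - Z) herr (m := Fk x0 w η x k), h.condExp_x_succ_Fk k,
    h.condExp_error_succ_Fk k] with ω h1 h2 h3 h4 h5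
  rw [h1, Pi.add_apply, h2, h3, h4, h5]
  simp only [Sys.Psi, Matrix.add_mulVec, Matrix.smul_mulVec, Matrix.sub_mulVec,
    Matrix.mulVec_smul, Matrix.mulVec_sub]
  module

lemma condExp_costate_GY (h : ClosedLoop S μ x0 w η x uL uR) (Z X : Matrix (Fin n) (Fin n) ℝ)
    (k : ℕ) :
    μ[costate μ η x Z X (k + 1) | GY η x k] =ᵐ[μ] fun ω =>
      Z *ᵥ S.drift (μ[x k | GY η x k] ω) (μ[uL k | GY η x k] ω) (uR k ω) := by
  have hd := S.integrable_drift (h.integrable_x k) (h.integrable_uL k) (h.integrable_uR k)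
  have hdh := S.integrable_drift (integrable_condExp (f := x k) (m := GY η x k))
    (integrable_condExp (f := uL k) (m := GY η x k)) (h.integrable_uR k)
  have hdh_meas : StronglyMeasurable[GY η x k]
      (fun ω => S.drift (μ[x k | GY η x k] ω) (μ[uL k | GY η x k] ω) (uR k ω)) :=
    (S.measurable_drift stronglyMeasurable_condExp.measurable stronglyMeasurable_condExp.measurable
      (h.stronglyMeasurable_uR k).measurable).stronglyMeasurable
  refine (condExp_condExp_of_le (GY_le_Fk k) (h.Fk_le k)).symm.trans <|
    (condExp_congr_ae (h.condExp_costate_Fk Z X k)).trans ?_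
  filter_upwards [condExp_add (integrable_mulVec Z hdh)
      (integrable_mulVec (S.Psi Z X) (hd.sub hdh)) (GY η x k),
    condExp_mulVec (S.Psi Z X) (hd.sub hdh) (m := GY η x k),
    condExp_sub hd hdh (GY η x k),
    S.condExp_drift (h.GY_le k) (h.integrable_x k) (h.integrable_uL k)
      (h.stronglyMeasurable_uR k) (h.integrable_uR k)] with ω h1 h2 h3 h4
  refine h1.trans ?_
  rw [Pi.add_apply, h2, h3, Pi.sub_apply, h4,
    condExp_of_stronglyMeasurable (h.GY_le k) hdh_meas hdh,
    condExp_of_stronglyMeasurable (h.GY_le k) (stronglyMeasurable_mulVec Z hdh_meas)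
      (integrable_mulVec Z hdh)]
  simp

lemma stationarity_ae (h : ClosedLoop S μ x0 w η x uL uR) (Z X : Matrix (Fin n) (Fin n) ℝ)
    (k : ℕ)
    (hL : (fun ω => μ[fun ω' => S.BLᵀ *ᵥ costate μ η x Z X (k + 1) ω' | Fk x0 w η x k] ω
      + S.RL *ᵥ uL k ω) =ᵐ[μ] 0)
    (hR : (fun ω => μ[fun ω' => S.BRᵀ *ᵥ costate μ η x Z X (k + 1) ω' | GY η x k] ω
      + S.RR *ᵥ uR k ω) =ᵐ[μ] 0) :
    ∀ᵐ ω ∂μ,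
      S.BLᵀ *ᵥ (Z *ᵥ S.drift (μ[x k | GY η x k] ω) (μ[uL k | GY η x k] ω) (uR k ω)
        + S.Psi Z X *ᵥ (S.drift (x k ω) (uL k ω) (uR k ω)
          - S.drift (μ[x k | GY η x k] ω) (μ[uL k | GY η x k] ω) (uR k ω)))
        + S.RL *ᵥ uL k ω = 0 ∧
      S.BLᵀ *ᵥ (Z *ᵥ S.drift (μ[x k | GY η x k] ω) (μ[uL k | GY η x k] ω) (uR k ω))
        + S.RL *ᵥ μ[uL k | GY η x k] ω = 0 ∧
      S.BRᵀ *ᵥ (Z *ᵥ S.drift (μ[x k | GY η x k] ω) (μ[uL k | GY η x k] ω) (uR k ω))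
        + S.RR *ᵥ uR k ω = 0 := by
  have hcost := h.integrable_costate Z X (k + 1)
  have huL := h.integrable_uL k
  have hLY : ∀ᵐ ω ∂μ, μ[fun ω' => S.BLᵀ *ᵥ costate μ η x Z X (k + 1) ω' | GY η x k] ω
      + S.RL *ᵥ μ[uL k | GY η x k] ω = 0 := by
    have h0 := condExp_congr_ae (m := GY η x k) hL
    rw [condExp_zero] at h0
    filter_upwards [h0, condExp_add integrable_condExp (integrable_mulVec S.RL huL) (GY η x k),
      condExp_condExp_of_le (f := fun ω' => S.BLᵀ *ᵥ costate μ η x Z X (k + 1) ω')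
        (GY_le_Fk k) (h.Fk_le k),
      condExp_mulVec S.RL huL (m := GY η x k)] with ω e0 e1 e2 e3
    rw [← e2, ← e3]
    exact e1.symm.trans e0
  filter_upwards [hL, hR, hLY, condExp_mulVec S.BLᵀ hcost (m := Fk x0 w η x k),
    condExp_mulVec S.BLᵀ hcost (m := GY η x k), condExp_mulVec S.BRᵀ hcost (m := GY η x k),
    h.condExp_costate_Fk Z X k, h.condExp_costate_GY Z X k] with ω eL eR eLY cL cLY cR hF hY
  rw [cL, hF] at eL
  rw [cLY, hY] at eLY
  rw [cR, hY] at eR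
  exact ⟨eL, eLY, eR⟩

end ClosedLoop

theorem lemma1_general {n mL mR N : ℕ} (S : Sys n mL mR)
    (P : Matrix (Fin n) (Fin n) ℝ)
    (μ : Measure Ω) [IsProbabilityMeasure μ]
    (x0 : Ω → Fin n → ℝ) (w : ℕ → Ω → Fin n → ℝ) (η : ℕ → Ω → ℝ)
    (x : ℕ → Ω → Fin n → ℝ) (uL : ℕ → Ω → Fin mL → ℝ) (uR : ℕ → Ω → Fin mR → ℝ)
    (lam : ℕ → Ω → Fin n → ℝ)
    -- positive semidefinite weights
    (hQpsd : S.Q.PosSemidef) (hRLpsd : S.RL.PosSemidef) (hRRpsd : S.RR.PosSemidef)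
    (hPpsd : P.PosSemidef) (hp1 : S.p ≤ 1)
    -- probabilistic structure
    (hmx0 : Measurable x0) (hmw : ∀ k, Measurable (w k)) (hmη : ∀ k, Measurable (η k))
    (hη01 : ∀ k ω, η k ω = 0 ∨ η k ω = 1)
    (hη1 : ∀ k, μ {ω | η k ω = 1} = ENNReal.ofReal (1 - S.p))
    (hindep : iIndep (infoAlg x0 w η) μ)
    (hwmean : ∀ k, ∫ ω, w k ω ∂μ = 0)
    -- square integrability
    (hwL2 : ∀ k, MemLp (w k) 2 μ)
    (hxL2 : ∀ k, MemLp (x k) 2 μ)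
    (huLL2 : ∀ k, MemLp (uL k) 2 μ) (huRL2 : ∀ k, MemLp (uR k) 2 μ)
    -- plant dynamics
    (hx0eq : x 0 = x0)
    (hdyn : ∀ k ω, x (k + 1) ω
      = S.A *ᵥ x k ω + S.BL *ᵥ uL k ω + S.BR *ᵥ uR k ω + w k ω)
    -- admissible information structure of the controllers
    (huRmeas : ∀ k, StronglyMeasurable[GY η x k] (uR k))
    (huLmeas : ∀ k, StronglyMeasurable[Fk x0 w η x k] (uL k))
    -- positivity of `Υ_k` and `Λ_k` along the recursion
    (hUps : ∀ k, k ≤ N → (S.Ups ((S.ZX P (N - k)).1)).PosDef)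
    (hLam : ∀ k, k ≤ N →
      (S.Lam (S.Psi (S.ZX P (N - k)).1 (S.ZX P (N - k)).2)).PosDef)
    -- the candidate costate process `λ_{k−1} = Z_k x̂_{k|k} + X_k x̃_k`
    (hlam : ∀ k ω, lam k ω
      = (S.ZX P (N + 1 - k)).1 *ᵥ (μ[x k | GY η x k]) ω
        + (S.ZX P (N + 1 - k)).2 *ᵥ (x k ω - (μ[x k | GY η x k]) ω))
    -- stationarity conditions on the controls
    (hstatL : ∀ k, k ≤ N →
      (fun ω => (μ[fun ω' => S.BLᵀ *ᵥ lam (k + 1) ω' | Fk x0 w η x k]) ω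
        + S.RL *ᵥ uL k ω) =ᵐ[μ] 0)
    (hstatR : ∀ k, k ≤ N →
      (fun ω => (μ[fun ω' => S.BRᵀ *ᵥ lam (k + 1) ω' | GY η x k]) ω
        + S.RR *ᵥ uR k ω) =ᵐ[μ] 0) :
    (∀ k, k ≤ N →
      lam k =ᵐ[μ]
        fun ω => (μ[fun ω' => S.Aᵀ *ᵥ lam (k + 1) ω' | Fk x0 w η x k]) ω
          + S.Q *ᵥ x k ω) ∧
    lam (N + 1) =ᵐ[μ] fun ω => P *ᵥ x (N + 1) ω := by
  have h : ClosedLoop S μ x0 w η x uL uR :=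
    { measurable_x0 := hmx0, measurable_w := hmw, measurable_η := hmη, η_eq_zero_or_one := hη01
      measure_η_eq_one := hη1, p_le_one := hp1, iIndep := hindep, integral_w := hwmean
      integrable_w := fun k => (hwL2 k).integrable one_le_two
      integrable_x := fun k => (hxL2 k).integrable one_le_two
      integrable_uL := fun k => (huLL2 k).integrable one_le_two
      integrable_uR := fun k => (huRL2 k).integrable one_le_two
      x_zero := hx0eq, x_succ := hdyn
      stronglyMeasurable_uR := huRmeas, stronglyMeasurable_uL := huLmeas }
  have hRL := isHermitian_iff_isSymm.1 hRLpsd.isHermitian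
  have hRR := isHermitian_iff_isSymm.1 hRRpsd.isHermitian
  refine ⟨fun k hk => ?_, ae_of_all _ fun ω => ?_⟩
  · obtain ⟨hZ, hX⟩ := S.ZX_isSymm (isHermitian_iff_isSymm.1 hQpsd.isHermitian) hRL hRR
      (isHermitian_iff_isSymm.1 hPpsd.isHermitian) (N - k)
    set Z := (S.ZX P (N - k)).1
    set X := (S.ZX P (N - k)).2
    have hlam_succ : lam (k + 1) = costate μ η x Z X (k + 1) :=
      funext fun ω => by rw [hlam, show N + 1 - (k + 1) = N - k by omega]; rfl
    have hlam_k : lam k = costate μ η x (S.Zstep Z) (S.Xstep (S.Psi Z X)) k :=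
      funext fun ω => by rw [hlam, show N + 1 - k = N - k + 1 by omega]; rfl
    have hstat := h.stationarity_ae Z X k (hlam_succ ▸ hstatL k hk) (hlam_succ ▸ hstatR k hk)
    filter_upwards [hstat, condExp_mulVec S.Aᵀ (h.integrable_costate Z X (k + 1))
      (m := Fk x0 w η x k), h.condExp_costate_Fk Z X k] with ω ⟨hL, hLY, hR⟩ hA hcost
    rw [hlam_k, hlam_succ, hA, hcost]
    exact S.costate_step hZ hX hRL hRR (hUps k hk).det_pos.ne'.isUnit
      (hLam k hk).det_pos.ne'.isUnit hL hLY hR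
  · rw [hlam, Nat.sub_self]
    change P *ᵥ _ + P *ᵥ _ = P *ᵥ x (N + 1) ω
    rw [← Matrix.mulVec_add, add_sub_cancel]

/-- Lemma 1 of the paper.  Under the standing probabilistic
assumptions on the networked control system, if `Υ_k > 0` and `Λ_k > 0` along the
Riccati recursion, then the process `λ_{k−1} = Z_k x̂_{k|k} + X_k x̃_k` (here `lam k`
denotes `λ_{k−1}`, `x̂_{k|k} = E[x_k | F{Y_k}]` and `x̃_k = x_k − x̂_{k|k}`) solves the
forward–backward stochastic difference equations: the costate equation
`λ_{k−1} = E[A′λ_k | F_k] + Q x_k` for `k = 0, …, N` and the terminal condition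
`λ_N = P_{N+1} x_{N+1}`, provided the controls satisfy the stationarity conditions
`0 = E[(B^L)′λ_k | F_k] + R^L u_k^L` and `0 = E[(B^R)′λ_k | F{Y_k}] + R^R u_k^R`. -/
theorem lemma1 {n mL mR N : ℕ} (S : Sys n mL mR)
    (P : Matrix (Fin n) (Fin n) ℝ)
    (μ : Measure Ω) [IsProbabilityMeasure μ]
    (x0 : Ω → Fin n → ℝ) (w : ℕ → Ω → Fin n → ℝ) (η : ℕ → Ω → ℝ)
    (x : ℕ → Ω → Fin n → ℝ) (uL : ℕ → Ω → Fin mL → ℝ) (uR : ℕ → Ω → Fin mR → ℝ)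
    (lam : ℕ → Ω → Fin n → ℝ)
    -- positive semidefinite weights
    (hQpsd : S.Q.PosSemidef) (hRLpsd : S.RL.PosSemidef) (hRRpsd : S.RR.PosSemidef)
    (hPpsd : P.PosSemidef) (hp0 : 0 ≤ S.p) (hp1 : S.p ≤ 1)
    -- probabilistic structure
    (hmx0 : Measurable x0) (hmw : ∀ k, Measurable (w k)) (hmη : ∀ k, Measurable (η k))
    (hη01 : ∀ k ω, η k ω = 0 ∨ η k ω = 1)
    (hη1 : ∀ k, μ {ω | η k ω = 1} = ENNReal.ofReal (1 - S.p))
    (hindep : iIndep (infoAlg x0 w η) μ)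
    (hwmean : ∀ k, ∫ ω, w k ω ∂μ = 0)
    -- square integrability
    (hx0L2 : MemLp x0 2 μ) (hwL2 : ∀ k, MemLp (w k) 2 μ)
    (hxL2 : ∀ k, MemLp (x k) 2 μ)
    (huLL2 : ∀ k, MemLp (uL k) 2 μ) (huRL2 : ∀ k, MemLp (uR k) 2 μ)
    -- plant dynamics
    (hx0eq : x 0 = x0)
    (hdyn : ∀ k ω, x (k + 1) ω
      = S.A *ᵥ x k ω + S.BL *ᵥ uL k ω + S.BR *ᵥ uR k ω + w k ω)
    -- admissible information structure of the controllers
    (huRmeas : ∀ k, StronglyMeasurable[GY η x k] (uR k))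
    (huLmeas : ∀ k, StronglyMeasurable[Fk x0 w η x k] (uL k))
    -- positivity of `Υ_k` and `Λ_k` along the recursion
    (hUps : ∀ k, k ≤ N → (S.Ups ((S.ZX P (N - k)).1)).PosDef)
    (hLam : ∀ k, k ≤ N →
      (S.Lam (S.Psi (S.ZX P (N - k)).1 (S.ZX P (N - k)).2)).PosDef)
    -- the candidate costate process `λ_{k−1} = Z_k x̂_{k|k} + X_k x̃_k`
    (hlam : ∀ k ω, lam k ω
      = (S.ZX P (N + 1 - k)).1 *ᵥ (μ[x k | GY η x k]) ω
        + (S.ZX P (N + 1 - k)).2 *ᵥ (x k ω - (μ[x k | GY η x k]) ω))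
    -- stationarity conditions on the controls
    (hstatL : ∀ k, k ≤ N →
      (fun ω => (μ[fun ω' => S.BLᵀ *ᵥ lam (k + 1) ω' | Fk x0 w η x k]) ω
        + S.RL *ᵥ uL k ω) =ᵐ[μ] 0)
    (hstatR : ∀ k, k ≤ N →
      (fun ω => (μ[fun ω' => S.BRᵀ *ᵥ lam (k + 1) ω' | GY η x k]) ω
        + S.RR *ᵥ uR k ω) =ᵐ[μ] 0) :
    (∀ k, k ≤ N →
      lam k =ᵐ[μ]
        fun ω => (μ[fun ω' => S.Aᵀ *ᵥ lam (k + 1) ω' | Fk x0 w η x k]) ω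
          + S.Q *ᵥ x k ω) ∧
    lam (N + 1) =ᵐ[μ] fun ω => P *ᵥ x (N + 1) ω :=
  lemma1_general S P μ x0 w η x uL uR lam hQpsd hRLpsd hRRpsd hPpsd hp1 hmx0 hmw hmη hη01 hη1 hindep
    hwmean hwL2 hxL2 huLL2 huRL2 hx0eq hdyn huRmeas huLmeas hUps hLam hlam hstatL hstatR

end NCS0
end
end

section
/- Let F be an n×n real matrix, 0 < p < 1, and Q_ω an n×n symmetric positive definite matrix. If √p·ρ(F) < 1, where ρ(F) is the spectral radius of F (the largest absolute value of its complex eigenvalues), then for every positive semi-definite initial matrix Σ_0 the sequence defined by Σ_k = p F Σ_{k−1} F′ + p Q_ω converges, as k → ∞, to the matrix P = Σ_{i=1}^{∞} p^i F^{i−1} Q_ω (F′)^{i−1}, which is positive definite and is the unique solution of the Stein equation P = p F P F′ + p Q_ω. -/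
/-!
With `B = √p • F` the recursion reads `Σₖ₊₁ = B Σₖ Bᵀ + p Q_ω`, since `Bᵏ M (Bᵀ)ᵏ = pᵏ Fᵏ M (Fᵀ)ᵏ`.
The hypothesis puts the complex spectrum of `B` inside the open unit disc, so by Gelfand's
formula `‖Bᵏ‖ ≤ rᵏ` eventually, for some `r < 1`. Hence `∑ₖ Bᵏ M (Bᵀ)ᵏ` converges for every `M`
and its terms tend to `0`. Its value `P` at `M = p Q_ω` solves the Stein equation, and every
sequence following the recursion satisfies `Σₖ - P = Bᵏ (Σ₀ - P) (Bᵀ)ᵏ → 0`; applied to a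
constant sequence this is uniqueness. Finally `P` is a limit of positive semidefinite partial
sums, so `P = B P Bᵀ + p Q_ω` is positive definite.
-/

open Matrix Filter Topology
open scoped NNReal ENNReal

lemma spectrum.norm_lt_one_of_mem_smul {𝕜 A : Type*} [NormedField 𝕜] [Ring A] [Algebra 𝕜 A]
    {a : A} {c : 𝕜} (hc : c ≠ 0) (h : ∀ z ∈ spectrum 𝕜 a, ‖c‖ * ‖z‖ < 1) :
    ∀ z ∈ spectrum 𝕜 (c • a), ‖z‖ < 1 := by
  rw [show c • a = Units.mk0 c hc • a from rfl, spectrum.unit_smul_eq_smul]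
  rintro _ ⟨w, hw, rfl⟩
  simpa [norm_smul] using h w hw

section BanachAlgebra

variable {A : Type*} [NormedRing A] [NormedAlgebra ℂ A] [CompleteSpace A]

lemma spectrum.spectralRadius_lt_one_of_forall_norm_lt_one {a : A}
    (h : ∀ z ∈ spectrum ℂ a, ‖z‖ < 1) : spectralRadius ℂ a < 1 := by
  rcases subsingleton_or_nontrivial A with hA | hA
  · simp [spectralRadius, spectrum.of_subsingleton]
  · exact_mod_cast spectrum.spectralRadius_lt_of_forall_lt a fun z hz ↦ by
      exact_mod_cast h z hz

lemma spectrum.exists_eventually_norm_pow_le_of_spectralRadius_lt_one {a : A}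
    (h : spectralRadius ℂ a < 1) :
    ∃ r ∈ Set.Ico (0 : ℝ) 1, ∀ᶠ k in atTop, ‖a ^ k‖ ≤ r ^ k := by
  obtain ⟨r, hρr, hr1⟩ := ENNReal.lt_iff_exists_nnreal_btwn.mp h
  refine ⟨r, ⟨r.2, by exact_mod_cast hr1⟩, ?_⟩
  have hroot := eventually_lt_of_limsup_lt
    ((limsup_pow_nnnorm_pow_one_div_le_spectralRadius a).trans_lt hρr)
  filter_upwards [hroot, eventually_ge_atTop 1] with k hk hk1
  have hk0 : (k : ℝ) ≠ 0 := by positivity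
  have : (‖a ^ k‖₊ : ℝ≥0∞) ≤ (r : ℝ≥0∞) ^ k := by
    simpa [← ENNReal.rpow_natCast, ← ENNReal.rpow_mul, hk0] using
      ENNReal.pow_le_pow_left (n := k) hk.le
  exact_mod_cast this

end BanachAlgebra

namespace Matrix

attribute [local instance] Matrix.linftyOpNormedAddCommGroup Matrix.linftyOpNormedSpace
  Matrix.linftyOpNormedRing Matrix.linftyOpNormedAlgebra

variable {m n : Type*} [Fintype m] [Fintype n]

lemma linfty_opNorm_map_eq {α β : Type*} [NormedAddCommGroup α] [NormedAddCommGroup β]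
    (A : Matrix m n α) (f : α → β) (hf : ∀ a, ‖f a‖₊ = ‖a‖₊) : ‖A.map f‖ = ‖A‖ := by
  simp only [linfty_opNorm_def, map_apply, hf]

lemma linfty_opNNNorm_apply_le {α : Type*} [NormedAddCommGroup α] (A : Matrix m n α) (i : m)
    (j : n) : ‖A i j‖₊ ≤ ‖A‖₊ := by
  rw [linfty_opNNNorm_def]
  exact (Finset.single_le_sum (fun _ _ ↦ zero_le) (Finset.mem_univ j)).trans
    (Finset.le_sup (f := fun i ↦ ∑ j, ‖A i j‖₊) (Finset.mem_univ i))

lemma linfty_opNorm_transpose_le {α : Type*} [NormedAddCommGroup α] (A : Matrix m n α) :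
    ‖Aᵀ‖ ≤ Fintype.card m * ‖A‖ := by
  suffices ‖Aᵀ‖₊ ≤ Fintype.card m * ‖A‖₊ by exact_mod_cast this
  rw [linfty_opNNNorm_def Aᵀ]
  exact Finset.sup_le fun j _ ↦
    (Finset.sum_le_card_nsmul _ _ _ fun i _ ↦ linfty_opNNNorm_apply_le A i j).trans_eq
      (by simp [nsmul_eq_mul])

open scoped ComplexOrder in
lemma isClosed_setOf_posSemidef {𝕜 : Type*} [RCLike 𝕜] :
    IsClosed {A : Matrix n n 𝕜 | A.PosSemidef} := by
  simp only [posSemidef_iff_dotProduct_mulVec, Set.ofPred_and, Set.ofPred_forall]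
  refine (isClosed_eq continuous_id.matrix_conjTranspose continuous_id).inter <|
    isClosed_iInter fun x ↦ isClosed_le continuous_const ?_
  fun_prop

lemma smul_pow_mul_mul_transpose_smul_pow {R : Type*} [CommSemiring R] [DecidableEq n] (c : R)
    (F M : Matrix n n R) (k : ℕ) :
    (c • F) ^ k * M * (c • F)ᵀ ^ k = (c ^ 2) ^ k • (F ^ k * M * Fᵀ ^ k) := by
  simp only [transpose_smul, smul_pow, smul_mul, Matrix.mul_smul, smul_smul, ← mul_pow, sq]

section Stein

variable {ι : Type*} [Fintype ι] [DecidableEq ι]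

def IsSchurStable (B : Matrix ι ι ℝ) : Prop :=
  ∀ z ∈ spectrum ℂ (B.map (algebraMap ℝ ℂ)), ‖z‖ < 1

noncomputable def steinSum (B Q : Matrix ι ι ℝ) : Matrix ι ι ℝ :=
  ∑' k, B ^ k * Q * Bᵀ ^ k

variable {B : Matrix ι ι ℝ}

lemma IsSchurStable.exists_eventually_norm_pow_le (hB : IsSchurStable B) :
    ∃ r ∈ Set.Ico (0 : ℝ) 1, ∀ᶠ k in atTop, ‖B ^ k‖ ≤ r ^ k := by
  obtain ⟨r, hr, hdecay⟩ := spectrum.exists_eventually_norm_pow_le_of_spectralRadius_lt_one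
    (spectrum.spectralRadius_lt_one_of_forall_norm_lt_one hB)
  refine ⟨r, hr, hdecay.mono fun k hk ↦ ?_⟩
  rwa [← RingHom.mapMatrix_apply, ← map_pow, RingHom.mapMatrix_apply,
    linfty_opNorm_map_eq (B ^ k) (algebraMap ℝ ℂ) fun x ↦ Complex.nnnorm_real x] at hk

lemma IsSchurStable.summable_pow_mul_mul_transpose_pow (hB : IsSchurStable B)
    (M : Matrix ι ι ℝ) : Summable fun k ↦ B ^ k * M * Bᵀ ^ k := by
  obtain ⟨r, ⟨hr0, hr1⟩, hdecay⟩ := hB.exists_eventually_norm_pow_le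
  refine .of_norm_bounded_eventually_nat
    ((summable_geometric_of_lt_one (by positivity) (pow_lt_one₀ hr0 hr1 two_ne_zero)).mul_left
      (Fintype.card ι * ‖M‖)) ?_
  filter_upwards [hdecay] with k hk
  calc ‖B ^ k * M * Bᵀ ^ k‖ ≤ ‖B ^ k‖ * ‖M‖ * ‖(B ^ k)ᵀ‖ := by
        rw [transpose_pow]; exact (norm_mul_le _ _).trans (by gcongr; exact norm_mul_le _ _)
    _ ≤ ‖B ^ k‖ * ‖M‖ * (Fintype.card ι * ‖B ^ k‖) := by gcongr; exact linfty_opNorm_transpose_le _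
    _ ≤ r ^ k * ‖M‖ * (Fintype.card ι * r ^ k) := by gcongr
    _ = Fintype.card ι * ‖M‖ * (r ^ 2) ^ k := by ring

lemma IsSchurStable.mul_steinSum_mul_transpose_add (hB : IsSchurStable B) (Q : Matrix ι ι ℝ) :
    B * steinSum B Q * Bᵀ + Q = steinSum B Q := by
  have hsum := hB.summable_pow_mul_mul_transpose_pow Q
  calc B * steinSum B Q * Bᵀ + Q = ∑' k, B * (B ^ k * Q * Bᵀ ^ k) * Bᵀ + Q := by
        rw [(hsum.mul_left B).tsum_mul_right, hsum.tsum_mul_left, steinSum]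
    _ = steinSum B Q := by
        rw [steinSum, hsum.tsum_eq_zero_add, add_comm]
        simp only [pow_succ' B, pow_succ Bᵀ, mul_assoc, pow_zero, one_mul, mul_one]

lemma sub_eq_pow_mul_sub_mul_transpose_pow {S : ℕ → Matrix ι ι ℝ} {P Q : Matrix ι ι ℝ}
    (hS : ∀ k, S (k + 1) = B * S k * Bᵀ + Q) (hP : P = B * P * Bᵀ + Q) (k : ℕ) :
    S k - P = B ^ k * (S 0 - P) * Bᵀ ^ k := by
  induction k with
  | zero => simp
  | succ k ih =>
    calc S (k + 1) - P = B * (S k - P) * Bᵀ := by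
          rw [hS k]; nth_rw 1 [hP]; simp [mul_sub, sub_mul]
      _ = _ := by rw [ih, pow_succ' B, pow_succ Bᵀ]; simp only [mul_assoc]

lemma IsSchurStable.tendsto_of_stein_recursion (hB : IsSchurStable B) {S : ℕ → Matrix ι ι ℝ}
    {P Q : Matrix ι ι ℝ} (hS : ∀ k, S (k + 1) = B * S k * Bᵀ + Q) (hP : P = B * P * Bᵀ + Q) :
    Tendsto S atTop (𝓝 P) := by
  simpa [← sub_eq_pow_mul_sub_mul_transpose_pow hS hP] using
    ((hB.summable_pow_mul_mul_transpose_pow (S 0 - P)).tendsto_atTop_zero).const_add P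

lemma IsSchurStable.stein_solution_unique (hB : IsSchurStable B) {X P Q : Matrix ι ι ℝ}
    (hX : X = B * X * Bᵀ + Q) (hP : P = B * P * Bᵀ + Q) : X = P :=
  tendsto_nhds_unique tendsto_const_nhds
    (hB.tendsto_of_stein_recursion (S := fun _ ↦ X) (fun _ ↦ hX) hP)

lemma IsSchurStable.posSemidef_steinSum (hB : IsSchurStable B) {Q : Matrix ι ι ℝ}
    (hQ : Q.PosSemidef) : (steinSum B Q).PosSemidef := by
  have hterm (k : ℕ) : (B ^ k * Q * Bᵀ ^ k).PosSemidef := by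
    simpa [transpose_pow] using hQ.mul_mul_conjTranspose_same (B ^ k)
  exact isClosed_setOf_posSemidef.mem_of_tendsto
    (hB.summable_pow_mul_mul_transpose_pow Q).hasSum.tendsto_sum_nat
    (.of_forall fun k ↦ posSemidef_sum _ fun i _ ↦ hterm i)

lemma IsSchurStable.posDef_steinSum (hB : IsSchurStable B) {Q : Matrix ι ι ℝ}
    (hQ : Q.PosDef) : (steinSum B Q).PosDef := by
  rw [← hB.mul_steinSum_mul_transpose_add]
  refine .posSemidef_add ?_ hQ
  simpa using (hB.posSemidef_steinSum hQ.posSemidef).mul_mul_conjTranspose_same B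

end Stein

end Matrix

theorem covariance_recursion_converges_general {n : ℕ}
    (F Qw : Matrix (Fin n) (Fin n) ℝ) (p : ℝ)
    (hp0 : 0 < p)
    (hQw : Qw.PosDef)
    (hspec : ∀ z ∈ spectrum ℂ (F.map (algebraMap ℝ ℂ)), Real.sqrt p * ‖z‖ < 1) :
    ∃ P : Matrix (Fin n) (Fin n) ℝ,
      P = (∑' i : ℕ, p ^ (i + 1) • (F ^ i * Qw * Fᵀ ^ i)) ∧
      P.PosDef ∧
      P = p • (F * P * Fᵀ) + p • Qw ∧
      (∀ P' : Matrix (Fin n) (Fin n) ℝ, P' = p • (F * P' * Fᵀ) + p • Qw → P' = P) ∧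
      (∀ S0 : Matrix (Fin n) (Fin n) ℝ, S0.PosSemidef →
        ∀ Sg : ℕ → Matrix (Fin n) (Fin n) ℝ, Sg 0 = S0 →
          (∀ k : ℕ, Sg (k + 1) = p • (F * Sg k * Fᵀ) + p • Qw) →
          Tendsto Sg atTop (𝓝 P)) := by
  set B := Real.sqrt p • F
  have hB : IsSchurStable B := by
    have hmap : B.map (algebraMap ℝ ℂ) = (Real.sqrt p : ℂ) • F.map (algebraMap ℝ ℂ) := by
      ext; simp [B]
    rw [IsSchurStable, hmap]
    refine spectrum.norm_lt_one_of_mem_smul (by exact_mod_cast (Real.sqrt_pos.mpr hp0).ne') ?_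
    simpa [abs_of_nonneg (Real.sqrt_nonneg p)] using hspec
  have hconj (k : ℕ) (M : Matrix (Fin n) (Fin n) ℝ) :
      B ^ k * M * Bᵀ ^ k = p ^ k • (F ^ k * M * Fᵀ ^ k) := by
    rw [smul_pow_mul_mul_transpose_smul_pow, Real.sq_sqrt hp0.le]
  have hrec (M : Matrix (Fin n) (Fin n) ℝ) :
      p • (F * M * Fᵀ) + p • Qw = B * M * Bᵀ + p • Qw := by
    simpa using congrArg (· + p • Qw) (hconj 1 M).symm
  have hP := (hB.mul_steinSum_mul_transpose_add (p • Qw)).symm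
  refine ⟨steinSum B (p • Qw), ?_, hB.posDef_steinSum (hQw.smul hp0), hP.trans (hrec _).symm,
    fun P' hP' ↦ hB.stein_solution_unique (hP'.trans (hrec P')) hP,
    fun _ _ Sg _ hSg ↦ hB.tendsto_of_stein_recursion (fun k ↦ (hSg k).trans (hrec _)) hP⟩
  simp only [steinSum, hconj, Matrix.mul_smul, Matrix.smul_mul, smul_smul, pow_succ']

/-- If `√p · ρ(F) < 1` (every complex eigenvalue `z` of `F` satisfies
`√p · |z| < 1`), `0 < p < 1` and `Q_ω` is symmetric positive definite, then for every
positive semidefinite initial matrix `Σ₀` the sequence `Σ_k = p F Σ_{k-1} F′ + p Q_ω`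
converges to `P = ∑_{i=1}^∞ p^i F^{i-1} Q_ω (F′)^{i-1}`, which is positive definite and
is the unique solution of the Stein equation `P = p F P F′ + p Q_ω`. -/
theorem covariance_recursion_converges {n : ℕ}
    (F Qw : Matrix (Fin n) (Fin n) ℝ) (p : ℝ)
    (hp0 : 0 < p) (hp1 : p < 1)
    (hQw : Qw.PosDef)
    (hspec : ∀ z ∈ spectrum ℂ (F.map (algebraMap ℝ ℂ)), Real.sqrt p * ‖z‖ < 1) :
    ∃ P : Matrix (Fin n) (Fin n) ℝ,
      P = (∑' i : ℕ, p ^ (i + 1) • (F ^ i * Qw * Fᵀ ^ i)) ∧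
      P.PosDef ∧
      P = p • (F * P * Fᵀ) + p • Qw ∧
      (∀ P' : Matrix (Fin n) (Fin n) ℝ, P' = p • (F * P' * Fᵀ) + p • Qw → P' = P) ∧
      (∀ S0 : Matrix (Fin n) (Fin n) ℝ, S0.PosSemidef →
        ∀ Sg : ℕ → Matrix (Fin n) (Fin n) ℝ, Sg 0 = S0 →
          (∀ k : ℕ, Sg (k + 1) = p • (F * Sg k * Fᵀ) + p • Qw) →
          Tendsto Sg atTop (𝓝 P)) :=
  covariance_recursion_converges_general F Qw p hp0 hQw hspec
end

section
/- Let F be an n×n real matrix, 0 < p < 1, and Q_ω an n×n symmetric positive definite matrix. If √p·ρ(F) ≥ 1, where ρ(F) is the spectral radius of F, then for any positive semi-definite initial matrix Σ_0 the sequence defined by Σ_k = p F Σ_{k−1} F′ + p Q_ω does not converge; in particular the partial sums Σ_{i=1}^{k} p^i F^{i−1} Q_ω (F′)^{i−1} are unbounded as k → ∞. -/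
/-!
Let `z` be an eigenvalue of `F` with `p |z|² ≥ 1` and `v` a complex eigenvector of `Fᵀ` for it.
Then `v* F^j Q (Fᵀ)^j v = |z|^(2j) v* Q v`, and since `v* P v ≤ tr P ‖v‖²` for `P ⪰ 0`, every term
`p^(j+1) F^j Q (Fᵀ)^j` of the partial sums has trace at least `p (p |z|²)^j v* Q v / ‖v‖²`, which
is bounded below by a positive constant: the traces grow linearly. A solution of the recursion
with `Σ₀ ⪰ 0` dominates the partial sums in the Loewner order (their difference is
`p^k F^k Σ₀ (Fᵀ)^k`), so its trace diverges as well.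
-/

open Matrix Filter Topology

namespace Matrix

variable {m : Type*} [Fintype m]

theorem PosSemidef.dotProduct_mulVec_le_trace_mul {P : Matrix m m ℝ} (hP : P.PosSemidef)
    (x : m → ℝ) : x ⬝ᵥ P *ᵥ x ≤ P.trace * (x ⬝ᵥ x) := by
  classical
  -- with `P = Bᵀ B` this is Cauchy–Schwarz for each row of `B`
  open scoped MatrixOrder in
  obtain ⟨B, rfl⟩ := CStarAlgebra.nonneg_iff_eq_star_mul_self.mp hP.nonneg
  have hquad : x ⬝ᵥ (star B * B) *ᵥ x = ∑ j, (B j ⬝ᵥ x) ^ 2 := by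
    rw [← mulVec_mulVec, dotProduct_mulVec, star_eq_conjTranspose,
      conjTranspose_eq_transpose_of_trivial, vecMul_transpose]
    simp [dotProduct, mulVec, sq]
  have htrace : (star B * B).trace = ∑ j, B j ⬝ᵥ B j := by
    rw [trace_mul_comm]
    simp [trace, mul_apply, dotProduct]
  rw [hquad, htrace, Finset.sum_mul]
  gcongr with j
  simpa [dotProduct, sq] using Finset.sum_mul_sq_le_sq_mul_sq Finset.univ (B j) x

theorem re_star_dotProduct_map_mulVec (P : Matrix m m ℝ) (v : m → ℂ) :
    (star v ⬝ᵥ P.map (algebraMap ℝ ℂ) *ᵥ v).re =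
      (Complex.re ∘ v) ⬝ᵥ P *ᵥ (Complex.re ∘ v) + (Complex.im ∘ v) ⬝ᵥ P *ᵥ (Complex.im ∘ v) := by
  simp only [dotProduct, mulVec, Finset.mul_sum, Complex.re_sum, ← Finset.sum_add_distrib]
  refine Finset.sum_congr rfl fun i _ => Finset.sum_congr rfl fun j _ => ?_
  simp [Complex.mul_re, Complex.mul_im]

theorem PosSemidef.re_star_dotProduct_map_mulVec_le {P : Matrix m m ℝ} (hP : P.PosSemidef)
    (v : m → ℂ) :
    (star v ⬝ᵥ P.map (algebraMap ℝ ℂ) *ᵥ v).re ≤ P.trace * ∑ i, Complex.normSq (v i) := by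
  have hnormSq : ∑ i, Complex.normSq (v i) =
      (Complex.re ∘ v) ⬝ᵥ (Complex.re ∘ v) + (Complex.im ∘ v) ⬝ᵥ (Complex.im ∘ v) := by
    simp [dotProduct, Complex.normSq_apply, Finset.sum_add_distrib]
  rw [re_star_dotProduct_map_mulVec, hnormSq, mul_add]
  exact add_le_add (hP.dotProduct_mulVec_le_trace_mul _) (hP.dotProduct_mulVec_le_trace_mul _)

theorem PosDef.re_star_dotProduct_map_mulVec_pos {P : Matrix m m ℝ} (hP : P.PosDef)
    {v : m → ℂ} (hv : v ≠ 0) : 0 < (star v ⬝ᵥ P.map (algebraMap ℝ ℂ) *ᵥ v).re := by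
  have hquad (x : m → ℝ) : 0 ≤ x ⬝ᵥ P *ᵥ x := hP.posSemidef.dotProduct_mulVec_nonneg x
  have hpos {x : m → ℝ} (hx : x ≠ 0) : 0 < x ⬝ᵥ P *ᵥ x := hP.dotProduct_mulVec_pos hx
  rw [re_star_dotProduct_map_mulVec]
  by_cases hre : Complex.re ∘ v = 0
  · have him : Complex.im ∘ v ≠ 0 := fun him =>
      hv (funext fun i => Complex.ext (congrFun hre i) (congrFun him i))
    exact add_pos_of_nonneg_of_pos (hquad _) (hpos him)
  · exact add_pos_of_pos_of_nonneg (hpos hre) (hquad _)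

theorem star_dotProduct_mul_mul_conjTranspose_mulVec {R : Type*} [CommSemiring R] [StarRing R]
    (M A : Matrix m m R) (v : m → R) :
    star v ⬝ᵥ (M * A * Mᴴ) *ᵥ v = star (Mᴴ *ᵥ v) ⬝ᵥ A *ᵥ (Mᴴ *ᵥ v) := by
  rw [star_mulVec, conjTranspose_conjTranspose, ← mulVec_mulVec, ← mulVec_mulVec, dotProduct_mulVec]

variable [DecidableEq m]

theorem star_dotProduct_pow_mul_mul_conjTranspose_pow_mulVec {R : Type*} [CommSemiring R]
    [StarRing R] {M : Matrix m m R} {v : m → R} {z : R} (hv : Mᴴ *ᵥ v = z • v)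
    (A : Matrix m m R) (j : ℕ) :
    star v ⬝ᵥ (M ^ j * A * (M ^ j)ᴴ) *ᵥ v = (star z * z) ^ j * (star v ⬝ᵥ A *ᵥ v) := by
  induction j with
  | zero => simp
  | succ j ih =>
    have hconj : M ^ (j + 1) * A * (M ^ (j + 1))ᴴ = M * (M ^ j * A * (M ^ j)ᴴ) * Mᴴ := by
      simp only [pow_succ', conjTranspose_mul, conjTranspose_pow, Matrix.mul_assoc]
    rw [hconj, star_dotProduct_mul_mul_conjTranspose_mulVec, hv, star_smul, mulVec_smul,
      smul_dotProduct, dotProduct_smul, ih, smul_eq_mul, smul_eq_mul, pow_succ]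
    ring

theorem exists_ne_zero_transpose_mulVec_eq_smul {K : Type*} [Field K] {A : Matrix m m K} {z : K}
    (hz : z ∈ spectrum K A) : ∃ v ≠ 0, Aᵀ *ᵥ v = z • v := by
  rw [mem_spectrum_iff_isRoot_charpoly, ← charpoly_transpose, ← mem_spectrum_iff_isRoot_charpoly,
    ← spectrum_toLin', ← Module.End.hasEigenvalue_iff_mem_spectrum] at hz
  obtain ⟨v, hv, hv0⟩ := hz.exists_hasEigenvector
  exact ⟨v, hv0, by simpa using Module.End.mem_eigenspace_iff.mp hv⟩

theorem PosSemidef.normSq_pow_mul_le_trace_mul {F Q : Matrix m m ℝ} (hQ : Q.PosSemidef) {z : ℂ}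
    {v : m → ℂ} (hv : (F.map (algebraMap ℝ ℂ))ᵀ *ᵥ v = z • v) (j : ℕ) :
    Complex.normSq z ^ j * (star v ⬝ᵥ Q.map (algebraMap ℝ ℂ) *ᵥ v).re ≤
      (F ^ j * Q * Fᵀ ^ j).trace * ∑ i, Complex.normSq (v i) := by
  have hreal : Function.Semiconj (algebraMap ℝ ℂ) star star := fun _ => by simp
  have hv' : (F.map (algebraMap ℝ ℂ))ᴴ *ᵥ v = z • v := by
    rwa [← conjTranspose_map _ hreal, conjTranspose_eq_transpose_of_trivial, transpose_map]
  have hmap : (F ^ j * Q * Fᵀ ^ j).map (algebraMap ℝ ℂ) =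
      F.map (algebraMap ℝ ℂ) ^ j * Q.map (algebraMap ℝ ℂ) * (F.map (algebraMap ℝ ℂ) ^ j)ᴴ := by
    rw [conjTranspose_pow, ← conjTranspose_map _ hreal, conjTranspose_eq_transpose_of_trivial]
    simp only [← RingHom.mapMatrix_apply, map_mul, map_pow]
  have hPSD : (F ^ j * Q * Fᵀ ^ j).PosSemidef := by
    simpa [transpose_pow] using hQ.mul_mul_conjTranspose_same (F ^ j)
  calc Complex.normSq z ^ j * (star v ⬝ᵥ Q.map (algebraMap ℝ ℂ) *ᵥ v).re
      = (star v ⬝ᵥ (F ^ j * Q * Fᵀ ^ j).map (algebraMap ℝ ℂ) *ᵥ v).re := by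
        rw [hmap, star_dotProduct_pow_mul_mul_conjTranspose_pow_mulVec hv', Complex.star_def,
          ← Complex.normSq_eq_conj_mul_self, ← Complex.ofReal_pow, Complex.re_ofReal_mul]
    _ ≤ _ := hPSD.re_star_dotProduct_map_mulVec_le v

section conjPowSum

variable {R : Type*} [CommSemiring R]

def conjPowSum (F Q : Matrix m m R) (p : R) (k : ℕ) : Matrix m m R :=
  ∑ i ∈ Finset.range k, p ^ (i + 1) • (F ^ i * Q * Fᵀ ^ i)

theorem sum_Icc_eq_conjPowSum (F Q : Matrix m m R) (p : R) (k : ℕ) :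
    ∑ i ∈ Finset.Icc 1 k, p ^ i • (F ^ (i - 1) * Q * Fᵀ ^ (i - 1)) = conjPowSum F Q p k := by
  rw [conjPowSum, ← Finset.Ico_add_one_right_eq_Icc, Finset.sum_Ico_eq_sum_range]
  simp [add_comm]

theorem conjPowSum_succ (F Q : Matrix m m R) (p : R) (k : ℕ) :
    conjPowSum F Q p (k + 1) = p • (F * conjPowSum F Q p k * Fᵀ) + p • Q := by
  simp only [conjPowSum, Finset.sum_range_succ', Finset.mul_sum, Finset.sum_mul, Finset.smul_sum]
  congr 1
  · refine Finset.sum_congr rfl fun i _ => ?_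
    rw [mul_smul_comm, smul_mul_assoc, smul_smul, ← pow_succ', pow_succ' F, pow_succ Fᵀ]
    simp only [Matrix.mul_assoc]
  · simp

end conjPowSum

theorem posSemidef_sub_conjPowSum {F Q : Matrix m m ℝ} {p : ℝ} (hp : 0 ≤ p)
    {S : ℕ → Matrix m m ℝ} (hS0 : (S 0).PosSemidef)
    (hS : ∀ k, S (k + 1) = p • (F * S k * Fᵀ) + p • Q) (k : ℕ) :
    (S k - conjPowSum F Q p k).PosSemidef := by
  induction k with
  | zero => simpa [conjPowSum] using hS0
  | succ k ih =>
    have hstep : S (k + 1) - conjPowSum F Q p (k + 1) =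
        p • (F * (S k - conjPowSum F Q p k) * Fᵀ) := by
      rw [hS, conjPowSum_succ, Matrix.mul_sub, Matrix.sub_mul, smul_sub, add_sub_add_right_eq_sub]
    rw [hstep]
    simpa using (ih.mul_mul_conjTranspose_same F).smul hp

theorem tendsto_trace_conjPowSum_atTop {F Q : Matrix m m ℝ} {p : ℝ} (hp : 0 < p)
    (hQ : Q.PosDef) {z : ℂ} (hz : z ∈ spectrum ℂ (F.map (algebraMap ℝ ℂ)))
    (hpz : 1 ≤ p * Complex.normSq z) :
    Tendsto (fun k => (conjPowSum F Q p k).trace) atTop atTop := by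
  obtain ⟨v, hv0, hv⟩ := exists_ne_zero_transpose_mulVec_eq_smul hz
  set c := (star v ⬝ᵥ Q.map (algebraMap ℝ ℂ) *ᵥ v).re
  set N := ∑ i, Complex.normSq (v i)
  have hc : 0 < c := hQ.re_star_dotProduct_map_mulVec_pos hv0
  have hN : 0 < N := by
    obtain ⟨i, hi⟩ := Function.ne_iff.mp hv0
    exact Finset.sum_pos' (fun j _ => Complex.normSq_nonneg _)
      ⟨i, Finset.mem_univ _, Complex.normSq_pos.mpr hi⟩
  have hterm (i : ℕ) : p * c / N ≤ (p ^ (i + 1) • (F ^ i * Q * Fᵀ ^ i)).trace := by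
    rw [trace_smul, smul_eq_mul, div_le_iff₀ hN, mul_assoc]
    calc p * c ≤ p * ((p * Complex.normSq z) ^ i * c) := by
          gcongr
          exact le_mul_of_one_le_left hc.le (one_le_pow₀ hpz)
      _ = p ^ (i + 1) * (Complex.normSq z ^ i * c) := by ring
      _ ≤ p ^ (i + 1) * ((F ^ i * Q * Fᵀ ^ i).trace * N) :=
          mul_le_mul_of_nonneg_left (hQ.posSemidef.normSq_pow_mul_le_trace_mul hv i) (by positivity)
  have hlinear (k : ℕ) : k * (p * c / N) ≤ (conjPowSum F Q p k).trace := by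
    rw [conjPowSum, trace_sum]
    simpa using Finset.card_nsmul_le_sum (Finset.range k) _ _ fun i _ => hterm i
  exact tendsto_atTop_mono hlinear
    (tendsto_natCast_atTop_atTop.atTop_mul_const (by positivity))

end Matrix

theorem covariance_recursion_diverges_general {n : ℕ}
    (F Qw : Matrix (Fin n) (Fin n) ℝ) (p : ℝ)
    (hp0 : 0 < p)
    (hQw : Qw.PosDef)
    (hspec : ∃ z ∈ spectrum ℂ (F.map (algebraMap ℝ ℂ)), 1 ≤ Real.sqrt p * ‖z‖) :
    (∀ S0 : Matrix (Fin n) (Fin n) ℝ, S0.PosSemidef →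
      ∀ Sg : ℕ → Matrix (Fin n) (Fin n) ℝ, Sg 0 = S0 →
        (∀ k : ℕ, Sg (k + 1) = p • (F * Sg k * Fᵀ) + p • Qw) →
        ∀ L : Matrix (Fin n) (Fin n) ℝ, ¬ Tendsto Sg atTop (𝓝 L)) ∧
    Tendsto
      (fun k : ℕ =>
        (∑ i ∈ Finset.Icc 1 k, p ^ i • (F ^ (i - 1) * Qw * Fᵀ ^ (i - 1))).trace)
      atTop atTop := by
  obtain ⟨z, hz, hzp⟩ := hspec
  have hpz : 1 ≤ p * Complex.normSq z := by
    rw [Complex.normSq_eq_norm_sq, ← Real.sq_sqrt hp0.le, ← mul_pow]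
    exact one_le_pow₀ hzp
  have htrace := tendsto_trace_conjPowSum_atTop hp0 hQw hz hpz
  simp only [sum_Icc_eq_conjPowSum]
  refine ⟨fun S0 hS0 Sg hSg0 hSg L hL => ?_, htrace⟩
  have hSg_trace : Tendsto (fun k => (Sg k).trace) atTop atTop := by
    refine tendsto_atTop_mono (fun k => ?_) htrace
    have := (posSemidef_sub_conjPowSum hp0.le (hSg0 ▸ hS0) hSg k).trace_nonneg
    rwa [trace_sub, sub_nonneg] at this
  exact not_tendsto_atTop_of_tendsto_nhds ((continuous_id.matrix_trace.tendsto L).comp hL) hSg_trace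

/-- If `√p · ρ(F) ≥ 1` (some complex eigenvalue `z` of `F` satisfies
`√p · |z| ≥ 1`), `0 < p < 1` and `Q_ω` is symmetric positive definite, then for any
positive semidefinite initial matrix `Σ₀` the sequence `Σ_k = p F Σ_{k-1} F′ + p Q_ω`
does not converge; in particular the traces of the partial sums
`∑_{i=1}^k p^i F^{i-1} Q_ω (F′)^{i-1}` tend to infinity. -/
theorem covariance_recursion_diverges {n : ℕ}
    (F Qw : Matrix (Fin n) (Fin n) ℝ) (p : ℝ)
    (hp0 : 0 < p) (hp1 : p < 1)
    (hQw : Qw.PosDef)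
    (hspec : ∃ z ∈ spectrum ℂ (F.map (algebraMap ℝ ℂ)), 1 ≤ Real.sqrt p * ‖z‖) :
    (∀ S0 : Matrix (Fin n) (Fin n) ℝ, S0.PosSemidef →
      ∀ Sg : ℕ → Matrix (Fin n) (Fin n) ℝ, Sg 0 = S0 →
        (∀ k : ℕ, Sg (k + 1) = p • (F * Sg k * Fᵀ) + p • Qw) →
        ∀ L : Matrix (Fin n) (Fin n) ℝ, ¬ Tendsto Sg atTop (𝓝 L)) ∧
    Tendsto
      (fun k : ℕ =>
        (∑ i ∈ Finset.Icc 1 k, p ^ i • (F ^ (i - 1) * Qw * Fᵀ ^ (i - 1))).trace)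
      atTop atTop :=
  covariance_recursion_diverges_general F Qw p hp0 hQw hspec
end

section
/- Let A be n×n, B n×m, K m×n, R̃ a symmetric positive definite m×m matrix, C a q×n matrix with Q = C′C, and suppose the pair (A, C) is observable, i.e. the only vector v ∈ ℝ^n with C A^j v = 0 for all j = 0,…,n−1 is v = 0. If there exists a symmetric positive semi-definite matrix Z satisfying Z = K′R̃K + (A − BK)′ Z (A − BK) + Q, then every solution of the linear recursion β_{k+1} = (A − BK) β_k converges to 0; equivalently, the spectral radius of A − BK is strictly less than 1. -/
/-!
Along any trajectory of `β (k + 1) = (A - B * K) *ᵥ β k`, the quadratic form `β ⬝ᵥ Z *ᵥ β` is a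
Lyapunov function: by the Lyapunov identity it drops at each step by
`K β ⬝ᵥ Rt (K β) + C β ⬝ᵥ C β ≥ 0`. The decrements are therefore summable, so `K β_k → 0` and
`C β_k → 0`. Writing `A = (A - B K) + B K`, the output `C A^(j+1) β_k` equals `C A^j β_(k+1)`
plus a term driven by `K β_k`, so by induction `C A^j β_k → 0` for every `j`; observability makes
`x ↦ (C A^j x)_j` an injective linear map on a finite-dimensional space, hence a closed
embedding, and `β_k → 0`. Finally, an eigenvalue `z` with eigenvector `v` produces the real
trajectories `Re (z^k v)` and `Im (z^k v)`, which both tend to `0` only if `|z| < 1`.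
-/

open Matrix Filter Topology
open scoped MatrixOrder

variable {ι κ μ : Type*} [Fintype ι]

theorem Filter.Tendsto.const_mulVec {α R : Type*} [NonUnitalNonAssocSemiring R]
    [TopologicalSpace R] [ContinuousAdd R] [ContinuousMul R] {l : Filter α} (M : Matrix κ ι R)
    {x : α → ι → R} {a : ι → R} (h : Tendsto x l (𝓝 a)) :
    Tendsto (fun k => M *ᵥ x k) l (𝓝 (M *ᵥ a)) :=
  ((continuous_const.matrix_mulVec continuous_id).tendsto a).comp h

theorem tendsto_zero_of_le_sub_succ {d V : ℕ → ℝ} (hd : ∀ k, 0 ≤ d k) (hV : ∀ k, 0 ≤ V k)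
    (h : ∀ k, d k ≤ V k - V (k + 1)) : Tendsto d atTop (𝓝 0) := by
  refine (summable_of_sum_range_le (c := V 0) hd fun n => ?_).tendsto_atTop_zero
  calc ∑ k ∈ Finset.range n, d k ≤ ∑ k ∈ Finset.range n, (V k - V (k + 1)) :=
        Finset.sum_le_sum fun k _ => h k
    _ = V 0 - V n := Finset.sum_range_sub' V n
    _ ≤ V 0 := sub_le_self _ (hV n)

theorem norm_le_sqrt_dotProduct_self (w : ι → ℝ) : ‖w‖ ≤ √(w ⬝ᵥ w) := by
  refine (pi_norm_le_iff_of_nonneg (Real.sqrt_nonneg _)).2 fun i => ?_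
  rw [Real.norm_eq_abs, ← Real.sqrt_sq_eq_abs, sq]
  exact Real.sqrt_le_sqrt <|
    Finset.single_le_sum (fun j _ => mul_self_nonneg (w j)) (Finset.mem_univ i)

theorem tendsto_zero_of_dotProduct_self {w : ℕ → ι → ℝ}
    (h : Tendsto (fun k => w k ⬝ᵥ w k) atTop (𝓝 0)) : Tendsto w atTop (𝓝 0) :=
  squeeze_zero_norm (fun k => norm_le_sqrt_dotProduct_self (w k)) (by simpa using h.sqrt)

theorem tendsto_zero_of_posDef_dotProduct_mulVec [DecidableEq ι] {R : Matrix ι ι ℝ}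
    (hR : R.PosDef) {x : ℕ → ι → ℝ} (h : Tendsto (fun k => x k ⬝ᵥ R *ᵥ x k) atTop (𝓝 0)) :
    Tendsto x atTop (𝓝 0) := by
  obtain ⟨N, rfl⟩ : ∃ N : Matrix ι ι ℝ, R = Nᵀ * N :=
    CStarAlgebra.nonneg_iff_eq_star_mul_self.mp hR.posSemidef.nonneg
  have hN : Tendsto (fun k => N *ᵥ x k) atTop (𝓝 0) := by
    refine tendsto_zero_of_dotProduct_self ?_
    simpa [← mulVec_mulVec, dotProduct_mulVec, vecMul_transpose] using h
  have hinv : ∀ y, (Nᵀ * N)⁻¹ *ᵥ (Nᵀ *ᵥ (N *ᵥ y)) = y := fun y => by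
    rw [mulVec_mulVec, mulVec_mulVec, Matrix.mul_assoc,
      nonsing_inv_mul _ ((isUnit_iff_isUnit_det _).mp hR.isUnit), one_mulVec]
  simpa only [hinv, mulVec_zero] using (hN.const_mulVec Nᵀ).const_mulVec (Nᵀ * N)⁻¹

theorem tendsto_mulVec_zero_of_lyapunov [Fintype κ] [Fintype μ] [DecidableEq μ]
    {F Z : Matrix ι ι ℝ} {K : Matrix μ ι ℝ} {R : Matrix μ μ ℝ} {C : Matrix κ ι ℝ}
    (hR : R.PosDef) (hZ : Z.PosSemidef) (hLyap : Z = Kᵀ * R * K + Fᵀ * Z * F + Cᵀ * C)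
    {β : ℕ → ι → ℝ} (hβ : ∀ k, β (k + 1) = F *ᵥ β k) :
    Tendsto (fun k => K *ᵥ β k) atTop (𝓝 0) ∧ Tendsto (fun k => C *ᵥ β k) atTop (𝓝 0) := by
  set V : ℕ → ℝ := fun k => β k ⬝ᵥ Z *ᵥ β k
  have hV : ∀ k, 0 ≤ V k := fun k => hZ.dotProduct_mulVec_nonneg (β k)
  have hRK : ∀ k, 0 ≤ K *ᵥ β k ⬝ᵥ R *ᵥ (K *ᵥ β k) := fun k =>
    hR.posSemidef.dotProduct_mulVec_nonneg _
  have hCC : ∀ k, 0 ≤ C *ᵥ β k ⬝ᵥ C *ᵥ β k := fun k =>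
    Finset.sum_nonneg fun i _ => mul_self_nonneg _
  have hstep : ∀ k, V k = K *ᵥ β k ⬝ᵥ R *ᵥ (K *ᵥ β k) + V (k + 1) + C *ᵥ β k ⬝ᵥ C *ᵥ β k :=
    fun k => by
      conv_lhs => simp only [V]; rw [hLyap]
      simp only [V, hβ k, add_mulVec, dotProduct_add, ← mulVec_mulVec, dotProduct_mulVec,
        vecMul_transpose]
  refine ⟨tendsto_zero_of_posDef_dotProduct_mulVec hR ?_, tendsto_zero_of_dotProduct_self ?_⟩
  · exact tendsto_zero_of_le_sub_succ hRK hV fun k => by linarith [hstep k, hCC k]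
  · exact tendsto_zero_of_le_sub_succ hCC hV fun k => by linarith [hstep k, hRK k]

theorem tendsto_mul_pow_mulVec_zero_of_closedLoop [Fintype μ] [DecidableEq ι] {A : Matrix ι ι ℝ}
    {B : Matrix ι μ ℝ} {K : Matrix μ ι ℝ} {C : Matrix κ ι ℝ} {β : ℕ → ι → ℝ}
    (hβ : ∀ k, β (k + 1) = (A - B * K) *ᵥ β k) (hK : Tendsto (fun k => K *ᵥ β k) atTop (𝓝 0))
    (hC : Tendsto (fun k => C *ᵥ β k) atTop (𝓝 0)) (j : ℕ) :
    Tendsto (fun k => (C * A ^ j) *ᵥ β k) atTop (𝓝 0) := by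
  induction j with
  | zero => simpa using hC
  | succ j ih =>
    have hsplit : ∀ k, (C * A ^ (j + 1)) *ᵥ β k =
        (C * A ^ j) *ᵥ β (k + 1) + (C * A ^ j * B) *ᵥ (K *ᵥ β k) := fun k => by
      rw [hβ k, mulVec_mulVec, mulVec_mulVec, ← add_mulVec, Matrix.mul_sub, Matrix.mul_assoc _ B,
        sub_add_cancel, pow_succ, Matrix.mul_assoc]
    have hBK : Tendsto (fun k => (C * A ^ j * B) *ᵥ (K *ᵥ β k)) atTop (𝓝 0) := by
      simpa only [mulVec_zero] using hK.const_mulVec (C * A ^ j * B)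
    simpa only [hsplit, Function.comp_apply, add_zero] using
      (ih.comp (tendsto_add_atTop_nat 1)).add hBK

theorem tendsto_zero_of_observable [DecidableEq ι] {A : Matrix ι ι ℝ} {C : Matrix κ ι ℝ}
    (hobs : ∀ v, (∀ j : ℕ, (C * A ^ j) *ᵥ v = 0) → v = 0) {β : ℕ → ι → ℝ}
    (h : ∀ j : ℕ, Tendsto (fun k => (C * A ^ j) *ᵥ β k) atTop (𝓝 0)) :
    Tendsto β atTop (𝓝 0) := by
  let L : (ι → ℝ) →ₗ[ℝ] ℕ → κ → ℝ := LinearMap.pi fun j => (C * A ^ j).mulVecLin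
  have hL : LinearMap.ker L = ⊥ :=
    LinearMap.ker_eq_bot'.mpr fun v hv => hobs v fun j => congrFun hv j
  rw [(LinearMap.isClosedEmbedding_of_injective hL).tendsto_nhds_iff, map_zero,
    tendsto_pi_nhds]
  exact h

theorem Matrix.re_map_algebraMap_mulVec (M : Matrix κ ι ℝ) (u : ι → ℂ) :
    (fun i => ((M.map (algebraMap ℝ ℂ) *ᵥ u) i).re) = M *ᵥ fun j => (u j).re := by
  ext i
  simp [mulVec, dotProduct, Complex.re_sum]

theorem Matrix.im_map_algebraMap_mulVec (M : Matrix κ ι ℝ) (u : ι → ℂ) :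
    (fun i => ((M.map (algebraMap ℝ ℂ) *ᵥ u) i).im) = M *ᵥ fun j => (u j).im := by
  ext i
  simp [mulVec, dotProduct, Complex.im_sum]

theorem norm_lt_one_of_mem_spectrum_of_forall_tendsto_zero [DecidableEq ι] {F : Matrix ι ι ℝ}
    (hF : ∀ β : ℕ → ι → ℝ, (∀ k, β (k + 1) = F *ᵥ β k) → Tendsto β atTop (𝓝 0)) {z : ℂ}
    (hz : z ∈ spectrum ℂ (F.map (algebraMap ℝ ℂ))) : ‖z‖ < 1 := by
  rw [← Matrix.spectrum_toLin'] at hz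
  obtain ⟨v, hv, hv0⟩ := (Module.End.HasEigenvalue.of_mem_spectrum hz).exists_hasEigenvector
  rw [Module.End.mem_eigenspace_iff, toLin'_apply] at hv
  obtain ⟨i, hi⟩ := Function.ne_iff.mp hv0
  have hstep : ∀ k, F.map (algebraMap ℝ ℂ) *ᵥ (z ^ k • v) = z ^ (k + 1) • v := fun k => by
    rw [mulVec_smul, hv, smul_smul, pow_succ]
  have hre : Tendsto (fun k j => ((z ^ k • v) j).re) atTop (𝓝 0) :=
    hF _ fun k => by simp only [← hstep, re_map_algebraMap_mulVec]
  have him : Tendsto (fun k j => ((z ^ k • v) j).im) atTop (𝓝 0) :=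
    hF _ fun k => by simp only [← hstep, im_map_algebraMap_mulVec]
  have hcoord : Tendsto (fun k => (z ^ k • v) i) atTop (𝓝 0) := by
    refine squeeze_zero_norm (fun k => Complex.norm_le_abs_re_add_abs_im _) ?_
    simpa using ((tendsto_pi_nhds.mp hre i).abs).add (tendsto_pi_nhds.mp him i).abs
  have hpow : Tendsto (fun k => ‖z‖ ^ k) atTop (𝓝 0) := by
    simpa [norm_mul, norm_pow, mul_div_assoc, div_self (norm_ne_zero_iff.mpr hi)] using
      hcoord.norm.div_const ‖v i‖
  simpa using tendsto_pow_atTop_nhds_zero_iff.mp hpow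

/-- Lyapunov-plus-observability argument: if `R̃ > 0`, `Q = C′C`,
the pair `(A, C)` is observable, and some symmetric positive semidefinite `Z`
satisfies `Z = K′R̃K + (A − BK)′Z(A − BK) + Q`, then every solution of
`β_{k+1} = (A − BK)β_k` converges to `0`; equivalently `A − BK` is Schur stable
(all complex eigenvalues have absolute value `< 1`). -/
theorem lyapunov_observability_schur_stable {n m q : ℕ}
    (A : Matrix (Fin n) (Fin n) ℝ) (B : Matrix (Fin n) (Fin m) ℝ)
    (K : Matrix (Fin m) (Fin n) ℝ) (Rt : Matrix (Fin m) (Fin m) ℝ)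
    (C : Matrix (Fin q) (Fin n) ℝ)
    (hR : Rt.PosDef)
    (hobs : ∀ v : Fin n → ℝ, (∀ j : ℕ, j < n → (C * A ^ j) *ᵥ v = 0) → v = 0)
    (Z : Matrix (Fin n) (Fin n) ℝ) (hZ : Z.PosSemidef)
    (hLyap : Z = Kᵀ * Rt * K + (A - B * K)ᵀ * Z * (A - B * K) + Cᵀ * C) :
    (∀ β : ℕ → Fin n → ℝ, (∀ k : ℕ, β (k + 1) = (A - B * K) *ᵥ β k) →
        Tendsto β atTop (𝓝 0)) ∧
    (∀ z ∈ spectrum ℂ ((A - B * K).map (algebraMap ℝ ℂ)), ‖z‖ < 1) := by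
  have hstable : ∀ β : ℕ → Fin n → ℝ, (∀ k, β (k + 1) = (A - B * K) *ᵥ β k) →
      Tendsto β atTop (𝓝 0) := fun β hβ => by
    obtain ⟨hK, hC⟩ := tendsto_mulVec_zero_of_lyapunov hR hZ hLyap hβ
    exact tendsto_zero_of_observable (fun v hv => hobs v fun j _ => hv j)
      (tendsto_mul_pow_mulVec_zero_of_closedLoop hβ hK hC)
  exact ⟨hstable, fun z => norm_lt_one_of_mem_spectrum_of_forall_tendsto_zero hstable⟩
end
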